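/- arXiv:cs/0207027 — 7 statements merged into one kernel-verified Lean document; each statement's English description precedes it below -/
import Mathlib

section
/- For every integer N ≥ 1, the number of permutations σ of {0,…,N−1} satisfying σ^N(0) = 0 equals d(N)·(N−1)!. Hence for a uniformly random permutation σ of {0,…,N−1}, the probability that σ^N(0) = 0 is d(N)/N, whereas σ^N(0) = 0 holds for every cyclus σ. -/
/-!
`σ^N(0) = 0` says that the length of the cycle of `σ` through `0` divides `N`, and for every
`1 ≤ k ≤ N` exactly `(N-1)!` permutations put `0` on a cycle of length `k`. Indeed, writing a
permutation of `Option α` as `swap none (some q) * e` with `e` a permutation of `α`, the cycle of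
`none` is the cycle of `q` under `e` with `none` inserted, so it is one longer; since the count does
not depend on the base point (conjugate by a swap), induction on `N` gives `(N-1)!`. Summing over
the divisors of `N` gives `d(N)·(N-1)!`. For a cyclus the cycle through `0` has length `N`.
-/

open Equiv Function Finset
open scoped Nat

/-- A permutation of `Fin N` is a *cyclus* if its cycle decomposition consists of a single
cycle of length `N`; equivalently, every point can be reached from every point by iterating. -/
def IsCyclus {N : ℕ} (σ : Equiv.Perm (Fin N)) : Prop :=
  ∀ x y : Fin N, ∃ m : ℕ, (σ ^ m) x = y

section
variable {α β : Type*}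

theorem Equiv.Perm.minimalPeriod_pos [Finite α] (σ : Perm α) (x : α) : 0 < minimalPeriod σ x :=
  minimalPeriod_pos_of_mem_periodicPts (σ.injective.mem_periodicPts x)

theorem Equiv.Perm.pow_apply_eq_self_iff_minimalPeriod_dvd (σ : Perm α) (x : α) (n : ℕ) :
    (σ ^ n) x = x ↔ minimalPeriod σ x ∣ n := by
  rw [← isPeriodicPt_iff_minimalPeriod_dvd, IsPeriodicPt, IsFixedPt, Perm.iterate_eq_pow]

theorem minimalPeriod_permCongr (e : α ≃ β) (σ : Perm α) (x : α) :
    minimalPeriod (e.permCongr σ) (e x) = minimalPeriod σ x := by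
  have hsemiconj : Semiconj e σ (e.permCongr σ) := fun y => by simp
  refine minimalPeriod_eq_minimalPeriod_iff.2 fun n => ?_
  simp only [IsPeriodicPt, IsFixedPt, ← (hsemiconj.iterate_right n) x, e.apply_eq_iff_eq]

theorem card_filter_minimalPeriod_permCongr [Fintype α] [DecidableEq α] [Fintype β]
    [DecidableEq β] (e : α ≃ β) (x : α) (k : ℕ) :
    #{σ : Perm α | minimalPeriod σ x = k} = #{τ : Perm β | minimalPeriod τ (e x) = k} :=
  card_equiv e.permCongr fun σ => by simp [minimalPeriod_permCongr]

theorem minimalPeriod_eq_card_of_forall_exists_pow_apply_eq [Finite α] (σ : Perm α) (x : α)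
    (h : ∀ y, ∃ m : ℕ, (σ ^ m) x = y) : minimalPeriod σ x = Nat.card α := by
  have horbit : ∀ y, y ∈ MulAction.orbit (Subgroup.zpowers σ) x := fun y =>
    let ⟨m, hm⟩ := h y
    ⟨⟨σ ^ m, pow_mem (Subgroup.mem_zpowers σ) m⟩, hm⟩
  have := Fintype.ofFinite (MulAction.orbit (Subgroup.zpowers σ) x)
  rw [show ⇑σ = (σ • ·) from rfl, MulAction.minimalPeriod_eq_card, ← Nat.card_eq_fintype_card]
  exact Nat.card_congr (Equiv.subtypeUnivEquiv horbit)

end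

section
variable {α : Type*} [DecidableEq α]

theorem Equiv.Perm.decomposeOption_symm_some_apply_some (q : α) (e : Perm α) (y : α) :
    Perm.decomposeOption.symm (some q, e) (some y) = if e y = q then none else some (e y) := by
  split_ifs with h <;> simp [h, swap_apply_of_ne_of_ne]

theorem minimalPeriod_decomposeOption_symm_none (e : Perm α) :
    minimalPeriod (Perm.decomposeOption.symm (none, e)) none = 1 :=
  minimalPeriod_eq_one_iff_isFixedPt.2 (by simp [IsFixedPt])

theorem minimalPeriod_decomposeOption_symm_some [Finite α] (q : α) (e : Perm α) :
    minimalPeriod (Perm.decomposeOption.symm (some q, e)) none = minimalPeriod e q + 1 := by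
  set σ := Perm.decomposeOption.symm (some q, e)
  set m := minimalPeriod e q
  have hm : 0 < m := e.minimalPeriod_pos q
  have horbit : ∀ j < m, σ^[j + 1] none = some (e^[j] q) := by
    intro j hj
    induction j with
    | zero => simp [σ]
    | succ j ih =>
      have hne : e^[j + 1] q ≠ q := fun h =>
        Nat.succ_ne_zero j ((iterate_eq_iterate_iff_of_lt_minimalPeriod hj hm).1 (by simpa using h))
      rw [iterate_succ_apply', ih (by omega), Perm.decomposeOption_symm_some_apply_some,
        ← iterate_succ_apply' e, if_neg hne]
  have hreturn : IsPeriodicPt σ (m + 1) none := by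
    obtain ⟨j, hj⟩ : ∃ j, m = j + 1 := ⟨m - 1, by omega⟩
    rw [IsPeriodicPt, IsFixedPt, hj, iterate_succ_apply', horbit j (by omega),
      Perm.decomposeOption_symm_some_apply_some, ← iterate_succ_apply' e, Nat.succ_eq_add_one,
      ← hj, iterate_minimalPeriod, if_pos rfl]
  refine le_antisymm (hreturn.minimalPeriod_le m.succ_pos) (not_lt.1 fun hlt => ?_)
  obtain ⟨j, hj⟩ : ∃ j, minimalPeriod σ none = j + 1 :=
    ⟨_, (Nat.succ_pred_eq_of_pos (hreturn.minimalPeriod_pos m.succ_pos)).symm⟩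
  have hperiodic := iterate_minimalPeriod (f := σ) (x := none)
  rw [hj, horbit j (by omega)] at hperiodic
  exact Option.some_ne_none _ hperiodic

theorem card_filter_minimalPeriod_none_eq [Fintype α] (k : ℕ) :
    #{σ : Perm (Option α) | minimalPeriod σ none = k} =
      (if k = 1 then (Fintype.card α)! else 0) +
        ∑ q : α, #{e : Perm α | minimalPeriod e q + 1 = k} := by
  rw [card_filter, ← Perm.decomposeOption.symm.sum_comp, Fintype.sum_prod_type,
    Fintype.sum_option]
  simp only [minimalPeriod_decomposeOption_symm_none, minimalPeriod_decomposeOption_symm_some,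
    card_filter]
  rw [sum_const, Finset.card_univ, Fintype.card_perm, smul_ite, smul_eq_mul, mul_one, smul_zero]
  exact congrArg (· + _) (if_congr eq_comm rfl rfl)

end

theorem card_filter_minimalPeriod_fin_eq_factorial {n k : ℕ} (x : Fin n) (hk : 0 < k)
    (hkn : k ≤ n) : #{σ : Perm (Fin n) | minimalPeriod σ x = k} = (n - 1)! := by
  induction n generalizing k with
  | zero => exact x.elim0
  | succ n ih =>
    have hx : ((swap x 0).trans (finSuccEquiv n)) x = none := by simp
    rw [card_filter_minimalPeriod_permCongr ((swap x 0).trans (finSuccEquiv n)), hx,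
      card_filter_minimalPeriod_none_eq, Fintype.card_fin]
    rcases k with _ | _ | j
    · omega
    · simpa using fun q (e : Perm (Fin n)) => (e.minimalPeriod_pos q).ne'
    · have hfiber : ∀ q : Fin n, #{e : Perm (Fin n) | minimalPeriod e q + 1 = j + 2} = (n - 1)! :=
        fun q => by simpa using ih q (Nat.succ_pos j) (by omega)
      simp only [hfiber, sum_const, Finset.card_univ, Fintype.card_fin, smul_eq_mul]
      rw [if_neg (by omega), zero_add, Nat.add_sub_cancel, Nat.mul_factorial_pred (by omega)]

section
variable {α : Type*} [Fintype α] [DecidableEq α]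

theorem card_filter_minimalPeriod_eq_factorial (x : α) {k : ℕ} (hk : 0 < k)
    (hkα : k ≤ Fintype.card α) :
    #{σ : Perm α | minimalPeriod σ x = k} = (Fintype.card α - 1)! := by
  rw [card_filter_minimalPeriod_permCongr (Fintype.equivFin α)]
  exact card_filter_minimalPeriod_fin_eq_factorial _ hk hkα

theorem card_filter_pow_apply_eq_self (x : α) {n : ℕ} (hn : n ≠ 0) :
    #{σ : Perm α | (σ ^ n) x = x} = ∑ d ∈ n.divisors, #{σ : Perm α | minimalPeriod σ x = d} := by
  simp only [Perm.pow_apply_eq_self_iff_minimalPeriod_dvd]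
  rw [card_eq_sum_card_fiberwise (f := fun σ : Perm α => minimalPeriod σ x) (t := n.divisors)
    fun σ hσ => by simpa [hn] using hσ]
  refine sum_congr rfl fun d hd => ?_
  rw [filter_filter]
  exact congrArg card <| filter_congr fun σ _ =>
    and_iff_right_of_imp fun h => h ▸ Nat.dvd_of_mem_divisors hd

theorem card_filter_pow_card_apply_eq_self (x : α) :
    #{σ : Perm α | (σ ^ Fintype.card α) x = x} =
      #(Fintype.card α).divisors * (Fintype.card α - 1)! := by
  rw [card_filter_pow_apply_eq_self x (Fintype.card_pos_iff.2 ⟨x⟩).ne', sum_const_nat fun d hd =>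
    card_filter_minimalPeriod_eq_factorial x (Nat.pos_of_mem_divisors hd) (Nat.divisor_le hd)]

end

/-- The number of permutations `σ` of `{0,…,N−1}` with `σ^N(0) = 0` is `d(N)·(N−1)!`;
hence the probability of this event for a uniformly random permutation is `d(N)/N`,
whereas every cyclus satisfies `σ^N(0) = 0`. -/
theorem stmt_1 (N : ℕ) (hN : 1 ≤ N) :
    Nat.card {σ : Equiv.Perm (Fin N) // (σ ^ N) ⟨0, hN⟩ = ⟨0, hN⟩}
        = N.divisors.card * Nat.factorial (N - 1) ∧
    (Nat.card {σ : Equiv.Perm (Fin N) // (σ ^ N) ⟨0, hN⟩ = ⟨0, hN⟩} : ℚ)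
        / (Nat.factorial N : ℚ) = (N.divisors.card : ℚ) / N ∧
    ∀ σ : Equiv.Perm (Fin N), IsCyclus σ → (σ ^ N) ⟨0, hN⟩ = ⟨0, hN⟩ := by
  have hcount : Nat.card {σ : Perm (Fin N) // (σ ^ N) ⟨0, hN⟩ = ⟨0, hN⟩}
      = N.divisors.card * (N - 1)! := by
    simpa [Nat.card_eq_fintype_card, Fintype.card_subtype] using
      card_filter_pow_card_apply_eq_self (⟨0, hN⟩ : Fin N)
  refine ⟨hcount, ?_, fun σ hσ => ?_⟩
  · rw [hcount, ← Nat.mul_factorial_pred (by omega : N ≠ 0)]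
    push_cast
    field_simp
  · rw [Perm.pow_apply_eq_self_iff_minimalPeriod_dvd,
      minimalPeriod_eq_card_of_forall_exists_pow_apply_eq σ _ (hσ _), Nat.card_fin]
end

section
/- Let (f, s) be a partial injection on {0,…,N−1} with |s| = k which has no cycles. Then the number of cycluses σ of {0,…,N−1} satisfying σ(x) = f(x) for all x ∈ s equals (N−k−1)!. (Equivalently, a partial cyclus graph with m = N−k components has exactly (m−1)! cyclus graph extensions.) -/
/-- The partial injection `(f, s)` has a cycle: some `x ∈ s` returns to itself after `n ≥ 1`
steps, all intermediate points lying in `s`. -/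
def HasCycle {N : ℕ} (f : Fin N → Fin N) (s : Finset (Fin N)) : Prop :=
  ∃ x ∈ s, ∃ n : ℕ, 1 ≤ n ∧ (∀ j < n, f^[j] x ∈ s) ∧ f^[n] x = x


lemma perm_pow_eq_iter {N : ℕ} (σ : Equiv.Perm (Fin N)) (n : ℕ) (x : Fin N) :
    (σ ^ n) x = (⇑σ)^[n] x := rfl

/-- If all iterates of `x` stay in `t` and `f` is injective on `t`, we get a cycle. -/
lemma hasCycle_of_iterates {N : ℕ} {f : Fin N → Fin N} {t : Finset (Fin N)}
    (hinj : Set.InjOn f ↑t) {x : Fin N} (hx : x ∈ t) (hall : ∀ j, f^[j] x ∈ t) :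
    HasCycle f t := by
  have hcancel : ∀ a b, a ≤ b → f^[a] x = f^[b] x → x = f^[b - a] x := by
    intro a
    induction a with
    | zero => intro b _ h; simpa using h
    | succ a ih =>
      intro b hab h
      obtain ⟨c, rfl⟩ : ∃ c, b = c + 1 := ⟨b - 1, by omega⟩
      rw [Function.iterate_succ_apply', Function.iterate_succ_apply'] at h
      have h1 := hinj (hall a) (hall c) h
      have h2 := ih c (by omega) h1
      simpa [Nat.succ_sub_succ] using h2
  obtain ⟨a, b, hab, heq⟩ :=
    Finite.exists_ne_map_eq_of_infinite (fun j : ℕ => f^[j] x)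
  rcases lt_or_gt_of_ne hab with h | h
  · exact ⟨x, hx, b - a, by omega, fun j _ => hall j, (hcancel a b h.le heq).symm⟩
  · exact ⟨x, hx, a - b, by omega, fun j _ => hall j, (hcancel b a h.le heq.symm).symm⟩

/-- If a cyclus has an orbit returning after `n` steps within `t`, then `t` is everything. -/
lemma cyclus_subset {N : ℕ} {σ : Equiv.Perm (Fin N)} (hc : IsCyclus σ) {t : Finset (Fin N)}
    {x0 : Fin N} {n : ℕ} (hn : 1 ≤ n) (hret : (σ ^ n) x0 = x0)
    (hmem : ∀ j < n, (σ ^ j) x0 ∈ t) : ∀ y : Fin N, y ∈ t := by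
  intro y
  obtain ⟨m, hm⟩ := hc x0 y
  have key : ∀ q, (σ ^ (n * q)) x0 = x0 := by
    intro q
    induction q with
    | zero => simp
    | succ q ih =>
      have : n * (q + 1) = n * q + n := by ring
      rw [this, pow_add, Equiv.Perm.mul_apply, hret, ih]
  have hdecomp : m = n * (m / n) + m % n := (Nat.div_add_mod m n).symm
  have : (σ ^ m) x0 = (σ ^ (m % n)) x0 := by
    conv_lhs => rw [hdecomp]
    rw [add_comm, pow_add, Equiv.Perm.mul_apply, key]
  rw [hm] at this
  rw [this]
  exact hmem _ (Nat.mod_lt _ (by omega))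

/-- A cyclus agreeing with `g` on `t` is incompatible with a `g`-cycle inside small `t`. -/
lemma no_cycle_extension {N : ℕ} {σ : Equiv.Perm (Fin N)} (hc : IsCyclus σ)
    {g : Fin N → Fin N} {t : Finset (Fin N)} (hag : ∀ y ∈ t, σ y = g y)
    (hcyc : HasCycle g t) (hlt : t.card < N) : False := by
  obtain ⟨x0, hx0, n, hn1, hmemj, hret⟩ := hcyc
  have hiter : ∀ j ≤ n, (σ ^ j) x0 = g^[j] x0 := by
    intro j hj
    induction j with
    | zero => simp
    | succ j ih =>
      have hj' : j ≤ n := by omega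
      rw [pow_succ', Equiv.Perm.mul_apply, ih hj', Function.iterate_succ_apply']
      exact hag _ (hmemj j (by omega))
  have hret' : (σ ^ n) x0 = x0 := by rw [hiter n le_rfl]; exact hret
  have hmem' : ∀ j < n, (σ ^ j) x0 ∈ t := fun j hj => by
    rw [hiter j hj.le]; exact hmemj j hj
  have hall := cyclus_subset hc hn1 hret' hmem'
  have : (Finset.univ : Finset (Fin N)) ⊆ t := fun y _ => hall y
  have := Finset.card_le_card this
  simp [Finset.card_univ] at this
  omega

lemma card_lt_of_noCycle {N : ℕ} (hN : 1 ≤ N) {f : Fin N → Fin N} {s : Finset (Fin N)}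
    (hinj : Set.InjOn f ↑s) (hnc : ¬ HasCycle f s) : s.card < N := by
  by_contra h
  push_neg at h
  have hle : s.card ≤ N := by simpa [Finset.card_univ] using Finset.card_le_card (Finset.subset_univ s)
  have hs : s = Finset.univ := Finset.eq_univ_of_card s (by simpa [Finset.card_univ] using le_antisymm hle h)
  exact hnc (hasCycle_of_iterates hinj (x := ⟨0, hN⟩) (by simp [hs]) (fun j => by simp [hs]))
open Finset in
lemma main_base {N : ℕ} (f : Fin N → Fin N) (s : Finset (Fin N))
    (hinj : Set.InjOn f ↑s) (hnc : ¬ HasCycle f s) (hcard : s.card + 1 = N) :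
    Nat.card {σ : Equiv.Perm (Fin N) // IsCyclus σ ∧ ∀ x ∈ s, σ x = f x} = 1 := by
  classical
  -- the unique element not in s
  have hcompl : (Finset.univ \ s).card = 1 := by
    rw [Finset.card_sdiff_of_subset (Finset.subset_univ s)]
    simp [Finset.card_univ]; omega
  obtain ⟨x, hx⟩ := Finset.card_eq_one.mp hcompl
  have hxs : x ∉ s := by
    have : x ∈ Finset.univ \ s := by rw [hx]; simp
    simpa using this
  have hmem_s : ∀ y : Fin N, y ≠ x → y ∈ s := by
    intro y hy
    by_contra h
    have : y ∈ Finset.univ \ s := by simp [h]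
    rw [hx] at this; simp at this; exact hy this
  -- the unique element not in the image
  have himcard : (s.image f).card = s.card := Finset.card_image_of_injOn hinj
  have hcompl2 : (Finset.univ \ s.image f).card = 1 := by
    rw [Finset.card_sdiff_of_subset (Finset.subset_univ _), himcard]
    simp [Finset.card_univ]; omega
  obtain ⟨r0, hr0⟩ := Finset.card_eq_one.mp hcompl2
  have hr0im : r0 ∉ s.image f := by
    have : r0 ∈ Finset.univ \ s.image f := by rw [hr0]; simp
    simpa using this
  have hr0uniq : ∀ v : Fin N, v ∉ s.image f → v = r0 := by
    intro v hv
    have : v ∈ Finset.univ \ s.image f := by simp [hv]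
    rw [hr0] at this; simpa using this
  set g := Function.update f x r0 with hg
  have hgs : ∀ y ∈ s, g y = f y := by
    intro y hy; exact Function.update_of_ne (fun h => hxs (by rwa [h] at hy)) _ _
  have hgx : g x = r0 := Function.update_self _ _ _
  have hginj : Function.Injective g := by
    intro a b hab
    by_cases ha : a = x <;> by_cases hb : b = x
    · rw [ha, hb]
    · exfalso
      rw [ha, hgx, hgs b (hmem_s b hb)] at hab
      exact hr0im (Finset.mem_image.mpr ⟨b, hmem_s b hb, hab.symm⟩)
    · exfalso
      rw [hb, hgx, hgs a (hmem_s a ha)] at hab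
      exact hr0im (Finset.mem_image.mpr ⟨a, hmem_s a ha, hab⟩)
    · rw [hgs a (hmem_s a ha), hgs b (hmem_s b hb)] at hab
      exact hinj (hmem_s a ha) (hmem_s b hb) hab
  let σ : Equiv.Perm (Fin N) := Equiv.ofBijective g (Finite.injective_iff_bijective.mp hginj)
  have hσ : ∀ y, σ y = g y := fun y => rfl
  -- σ is a cyclus
  have hxall : ∀ y, ∃ m, (σ ^ m) y = x := by
    intro y
    by_contra h
    push_neg at h
    have hmem : ∀ m, (σ ^ m) y ∈ s := fun m => hmem_s _ (h m)
    have hiter : ∀ m, f^[m] y = (σ ^ m) y := by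
      intro m
      induction m with
      | zero => simp
      | succ m ih =>
        rw [Function.iterate_succ_apply', ih, pow_succ', Equiv.Perm.mul_apply,
          hσ, hgs _ (hmem m)]
    have hy : y ∈ s := by have := hmem 0; simpa using this
    exact hnc (hasCycle_of_iterates hinj hy (fun j => by rw [hiter]; exact hmem j))
  have hcyc : IsCyclus σ := by
    intro y z
    obtain ⟨a, ha⟩ := hxall y
    obtain ⟨b, hb⟩ := hxall z
    set p := orderOf σ with hp
    have hp1 : 0 < p := orderOf_pos σ
    have hσp : σ ^ p = 1 := pow_orderOf_eq_one σ
    refine ⟨(p * b - b) + a, ?_⟩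
    rw [pow_add, Equiv.Perm.mul_apply, ha, ← hb, ← Equiv.Perm.mul_apply, ← pow_add,
      Nat.sub_add_cancel (Nat.le_mul_of_pos_left b hp1), pow_mul, hσp, one_pow]
    rfl
  have hP : IsCyclus σ ∧ ∀ y ∈ s, σ y = f y := ⟨hcyc, fun y hy => by rw [hσ, hgs y hy]⟩
  have huniq : ∀ τ : Equiv.Perm (Fin N), (IsCyclus τ ∧ ∀ y ∈ s, τ y = f y) → τ = σ := by
    intro τ ⟨_, hτs⟩
    have hτx : τ x ∉ s.image f := by
      intro hmem
      obtain ⟨y, hy, hfy⟩ := Finset.mem_image.mp hmem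
      have : τ y = τ x := by rw [hτs y hy, hfy]
      exact hxs ((τ.injective this) ▸ hy)
    have hτxr : τ x = r0 := hr0uniq _ hτx
    ext y
    by_cases hy : y = x
    · rw [hy, hτxr, hσ, hgx]
    · rw [hτs y (hmem_s y hy), hσ, hgs y (hmem_s y hy)]
  rw [Nat.card_eq_one_iff_unique]
  constructor
  · exact ⟨fun a b => Subtype.ext (by rw [huniq a.1 a.2, huniq b.1 b.2])⟩
  · exact ⟨⟨σ, hP⟩⟩
lemma main_step {N d : ℕ}
    (ih : ∀ (f : Fin N → Fin N) (s : Finset (Fin N)), Set.InjOn f ↑s → ¬ HasCycle f s →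
      s.card + 1 + d = N →
      Nat.card {σ : Equiv.Perm (Fin N) // IsCyclus σ ∧ ∀ x ∈ s, σ x = f x} = Nat.factorial d)
    (f : Fin N → Fin N) (s : Finset (Fin N))
    (hinj : Set.InjOn f ↑s) (hnc : ¬ HasCycle f s) (hcard : s.card + 1 + (d+1) = N) :
    Nat.card {σ : Equiv.Perm (Fin N) // IsCyclus σ ∧ ∀ x ∈ s, σ x = f x}
      = Nat.factorial (d+1) := by
  classical
  set k := s.card with hk
  -- pick x ∉ s
  have hcompl : 0 < (Finset.univ \ s).card := by
    rw [Finset.card_sdiff_of_subset (Finset.subset_univ s)]; simp [Finset.card_univ]; omega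
  obtain ⟨x, hxmem⟩ := Finset.card_pos.mp hcompl
  have hxs : x ∉ s := (Finset.mem_sdiff.mp hxmem).2
  -- reachability set
  set R : Finset (Fin N) := Finset.univ.filter
      (fun w => ∃ j, f^[j] w = x ∧ ∀ i < j, f^[i] w ∈ s) with hRdef
  have hmemR : ∀ w, w ∈ R ↔ ∃ j, f^[j] w = x ∧ ∀ i < j, f^[i] w ∈ s := by
    intro w; simp [hRdef]
  have hxR : x ∈ R := (hmemR x).mpr ⟨0, rfl, by omega⟩
  have hRs : ∀ w ∈ R, w ≠ x → w ∈ s := by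
    intro w hw hwx
    obtain ⟨j, hj, hji⟩ := (hmemR w).mp hw
    cases j with
    | zero => simp at hj; exact absurd hj hwx
    | succ j => exact hji 0 (by omega)
  have hfR : ∀ w ∈ R, w ≠ x → f w ∈ R := by
    intro w hw hwx
    obtain ⟨j, hj, hji⟩ := (hmemR w).mp hw
    cases j with
    | zero => simp at hj; exact absurd hj hwx
    | succ j =>
      refine (hmemR _).mpr ⟨j, ?_, ?_⟩
      · rw [← Function.iterate_succ_apply]; exact hj
      · intro i hi
        rw [← Function.iterate_succ_apply]
        exact hji (i+1) (by omega)
  have hback : ∀ w ∈ s, f w ∈ R → w ∈ R := by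
    intro w hw hfw
    obtain ⟨j, hj, hji⟩ := (hmemR _).mp hfw
    refine (hmemR _).mpr ⟨j+1, ?_, ?_⟩
    · rw [Function.iterate_succ_apply]; exact hj
    · intro i hi
      cases i with
      | zero => simpa using hw
      | succ i => rw [Function.iterate_succ_apply]; exact hji i (by omega)
  -- cardinality of R ∩ image
  have hRsub : ↑(R.erase x) ⊆ (↑s : Set (Fin N)) := by
    intro w hw
    simp only [Finset.coe_erase, Set.mem_diff, Finset.mem_coe, Set.mem_singleton_iff] at hw
    exact hRs w hw.1 hw.2
  have himg : (R.erase x).image f = R ∩ s.image f := by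
    ext w
    simp only [Finset.mem_image, Finset.mem_inter, Finset.mem_erase]
    constructor
    · rintro ⟨y, ⟨hyx, hyR⟩, rfl⟩
      exact ⟨hfR y hyR hyx, ⟨y, hRs y hyR hyx, rfl⟩⟩
    · rintro ⟨hwR, hwim⟩
      obtain ⟨y, hy, rfl⟩ := hwim
      have hyR : y ∈ R := hback y hy hwR
      exact ⟨y, ⟨fun h => hxs (h ▸ hy), hyR⟩, rfl⟩
  have hcardR : (R ∩ s.image f).card = R.card - 1 := by
    rw [← himg, Finset.card_image_of_injOn (Set.InjOn.mono hRsub hinj),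
      Finset.card_erase_of_mem hxR]
  have hRpos : 1 ≤ R.card := Finset.card_pos.mpr ⟨x, hxR⟩
  set Bad : Finset (Fin N) := s.image f ∪ R with hBaddef
  have hBadcard : Bad.card = k + 1 := by
    have h1 := Finset.card_union_add_card_inter (s.image f) R
    have h2 : (s.image f ∩ R).card = R.card - 1 := by rw [Finset.inter_comm]; exact hcardR
    have h3 : (s.image f).card = k := Finset.card_image_of_injOn hinj
    rw [hBaddef]
    omega
  -- bad values admit no extension
  have hbad_empty : ∀ v ∈ Bad, ∀ σ : Equiv.Perm (Fin N),
      (IsCyclus σ ∧ ∀ y ∈ s, σ y = f y) → σ x = v → False := by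
    intro v hv σ ⟨hcyc, hσs⟩ hσx
    rcases Finset.mem_union.mp hv with hv | hv
    · obtain ⟨y, hy, hfy⟩ := Finset.mem_image.mp hv
      have : σ y = σ x := by rw [hσs y hy, hfy, hσx]
      exact hxs ((σ.injective this) ▸ hy)
    · obtain ⟨j, hj, hji⟩ := (hmemR v).mp hv
      set g := Function.update f x v with hgdef
      have hgx : g x = v := Function.update_self _ _ _
      have hgs : ∀ y ∈ s, g y = f y := fun y hy =>
        Function.update_of_ne (fun h => hxs (by rwa [h] at hy)) _ _
      have hiter : ∀ i ≤ j, g^[i+1] x = f^[i] v := by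
        intro i hi
        induction i with
        | zero => simpa using hgx
        | succ i ihh =>
          rw [Function.iterate_succ_apply' g, ihh (by omega),
            Function.iterate_succ_apply' f, hgs _ (hji i (by omega))]
      have hcycg : HasCycle g (insert x s) := by
        refine ⟨x, Finset.mem_insert_self _ _, j+1, by omega, ?_, ?_⟩
        · intro t ht
          cases t with
          | zero => simpa using Finset.mem_insert_self x s
          | succ t =>
            rw [hiter t (by omega)]
            exact Finset.mem_insert_of_mem (hji t (by omega))
        · rw [hiter j le_rfl, hj]
      have hag : ∀ y ∈ insert x s, σ y = g y := by
        intro y hy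
        rcases Finset.mem_insert.mp hy with rfl | hy
        · rw [hσx, hgx]
        · rw [hσs y hy, hgs y hy]
      have hlt : (insert x s).card < N := by
        rw [Finset.card_insert_of_notMem hxs]; omega
      exact no_cycle_extension hcyc hag hcycg hlt
  -- good values satisfy the hypotheses
  have hgood : ∀ v, v ∉ Bad →
      Set.InjOn (Function.update f x v) ↑(insert x s) ∧
      ¬ HasCycle (Function.update f x v) (insert x s) := by
    intro v hv
    set g := Function.update f x v with hgdef
    have hgx : g x = v := Function.update_self _ _ _
    have hgs : ∀ y, y ≠ x → g y = f y := fun y hy => Function.update_of_ne hy _ _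
    have hvim : v ∉ s.image f := fun h => hv (Finset.mem_union_left _ h)
    have hvR : v ∉ R := fun h => hv (Finset.mem_union_right _ h)
    constructor
    · intro a ha b hb hab
      rw [Finset.coe_insert, Set.mem_insert_iff] at ha hb
      have hmem_ne : ∀ y ∈ s, y ≠ x := fun y hy h => hxs (h ▸ hy)
      rcases ha with rfl | ha <;> rcases hb with rfl | hb
      · rfl
      · exfalso
        rw [hgx, hgs b (hmem_ne b hb)] at hab
        exact hvim (Finset.mem_image.mpr ⟨b, hb, hab.symm⟩)
      · exfalso
        rw [hgx, hgs a (hmem_ne a ha)] at hab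
        exact hvim (Finset.mem_image.mpr ⟨a, ha, hab⟩)
      · rw [hgs a (fun h => hxs (h ▸ ha)), hgs b (fun h => hxs (h ▸ hb))] at hab
        exact hinj ha hb hab
    · rintro ⟨x0, hx0, n, hn1, hmemj, hret⟩
      by_cases hcase : ∀ t, t < n → g^[t] x0 ≠ x
      · -- cycle avoids x : gives a cycle of f in s
        have hsm : ∀ t, t < n → g^[t] x0 ∈ s := by
          intro t ht
          rcases Finset.mem_insert.mp (hmemj t ht) with h | h
          · exact absurd h (hcase t ht)
          · exact h
        have hiter : ∀ t ≤ n, f^[t] x0 = g^[t] x0 := by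
          intro t ht
          induction t with
          | zero => simp
          | succ t ihh =>
            rw [Function.iterate_succ_apply', ihh (by omega),
              Function.iterate_succ_apply', hgs _ (hcase t (by omega))]
        have hx0s : x0 ∈ s := by
          have := hcase 0 (by omega); simp at this
          rcases Finset.mem_insert.mp hx0 with h | h
          · exact absurd h this
          · exact h
        exact hnc ⟨x0, hx0s, n, hn1,
          fun t ht => by rw [hiter t ht.le]; exact hsm t ht,
          by rw [hiter n le_rfl]; exact hret⟩
      · push_neg at hcase
        obtain ⟨i, hi, hix⟩ := hcase
        -- all iterates of x0 stay in insert x s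
        have hper : ∀ q, g^[n * q] x0 = x0 := by
          intro q
          induction q with
          | zero => simp
          | succ q ihq =>
            have : n * (q + 1) = n + n * q := by ring
            rw [this, Function.iterate_add_apply, ihq, hret]
        have hallmem : ∀ t, g^[t] x0 ∈ insert x s := by
          intro t
          have hdec : t % n + n * (t / n) = t := Nat.mod_add_div t n
          have : g^[t] x0 = g^[t % n] x0 := by
            conv_lhs => rw [← hdec]
            rw [Function.iterate_add_apply, hper]
          rw [this]
          exact hmemj _ (Nat.mod_lt _ (by omega))
        have hnx : g^[n] x = x := by
          rw [← hix, ← Function.iterate_add_apply, add_comm,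
            Function.iterate_add_apply, hret, hix]
        have hallx : ∀ t, g^[t] x ∈ insert x s := by
          intro t
          have heq : g^[t] x = g^[t + i] x0 := by
            rw [← hix, ← Function.iterate_add_apply]
          rw [heq]
          exact hallmem _
        have hex : ∃ m, 1 ≤ m ∧ g^[m] x = x := ⟨n, hn1, hnx⟩
        set m := Nat.find hex with hmdef
        obtain ⟨hm1, hmx⟩ : 1 ≤ m ∧ g^[m] x = x := Nat.find_spec hex
        have hmin : ∀ t, 1 ≤ t → t < m → g^[t] x ≠ x := by
          intro t h1 h2 hx'
          exact Nat.find_min hex h2 ⟨h1, hx'⟩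
        have hsmem : ∀ t, 1 ≤ t → t < m → g^[t] x ∈ s := by
          intro t h1 h2
          rcases Finset.mem_insert.mp (hallx t) with h | h
          · exact absurd h (hmin t h1 h2)
          · exact h
        have hiter2 : ∀ t, t ≤ m - 1 → f^[t] v = g^[t+1] x := by
          intro t ht
          induction t with
          | zero => simpa using hgx.symm
          | succ t ihh =>
            rw [Function.iterate_succ_apply' f, ihh (by omega),
              Function.iterate_succ_apply' g (t+1)]
            rw [hgs _ (fun h => hxs (h ▸ hsmem (t+1) (by omega) (by omega)))]
        refine hvR ((hmemR v).mpr ⟨m - 1, ?_, ?_⟩)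
        · have : (m - 1) + 1 = m := by omega
          rw [hiter2 (m-1) le_rfl, this, hmx]
        · intro i2 hi2
          rw [hiter2 i2 (by omega)]
          exact hsmem (i2+1) (by omega) (by omega)
  -- counting
  have key : ∀ v : Fin N,
      (Finset.univ.filter (fun σ : Equiv.Perm (Fin N) =>
        (IsCyclus σ ∧ ∀ y ∈ s, σ y = f y) ∧ σ x = v)).card
      = if v ∈ Bad then 0 else Nat.factorial d := by
    intro v
    by_cases hv : v ∈ Bad
    · rw [if_pos hv, Finset.card_eq_zero, Finset.filter_eq_empty_iff]
      rintro σ _ ⟨hP, hx'⟩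
      exact hbad_empty v hv σ hP hx'
    · rw [if_neg hv]
      obtain ⟨hinj', hnc'⟩ := hgood v hv
      have hcard' : (insert x s).card + 1 + d = N := by
        rw [Finset.card_insert_of_notMem hxs]; omega
      have hIH := ih (Function.update f x v) (insert x s) hinj' hnc' hcard'
      rw [Nat.card_eq_fintype_card, Fintype.card_subtype] at hIH
      rw [← hIH]
      congr 1
      apply Finset.filter_congr
      intro σ _
      constructor
      · rintro ⟨⟨hcyc, hσs⟩, hσx⟩
        refine ⟨hcyc, ?_⟩
        intro y hy
        rcases Finset.mem_insert.mp hy with rfl | hy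
        · rw [hσx, Function.update_self]
        · rw [hσs y hy, Function.update_of_ne (fun h => hxs (by rwa [h] at hy))]
      · rintro ⟨hcyc, hσs⟩
        refine ⟨⟨hcyc, ?_⟩, ?_⟩
        · intro y hy
          rw [hσs y (Finset.mem_insert_of_mem hy),
            Function.update_of_ne (fun h => hxs (by rwa [h] at hy))]
        · rw [hσs x (Finset.mem_insert_self _ _), Function.update_self]
  rw [Nat.card_eq_fintype_card, Fintype.card_subtype]
  rw [Finset.card_eq_sum_card_fiberwise
    (f := fun σ : Equiv.Perm (Fin N) => σ x) (t := Finset.univ)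
    (fun σ _ => Finset.mem_univ _)]
  have hsum : ∀ v ∈ Finset.univ, (Finset.filter (fun σ : Equiv.Perm (Fin N) => σ x = v)
      (Finset.filter (fun σ => IsCyclus σ ∧ ∀ y ∈ s, σ y = f y) Finset.univ)).card
      = if v ∈ Bad then 0 else Nat.factorial d := by
    intro v _
    rw [Finset.filter_filter]
    exact key v
  rw [Finset.sum_congr rfl hsum, Finset.sum_ite, Finset.sum_const, Finset.sum_const]
  have hfilt : Finset.filter (fun v => ¬ v ∈ Bad) Finset.univ = Finset.univ \ Bad := by
    rw [Finset.sdiff_eq_filter]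
  rw [hfilt, Finset.card_sdiff_of_subset (Finset.subset_univ _), hBadcard]
  simp only [Finset.card_univ, Fintype.card_fin, smul_eq_mul, mul_zero, zero_add]
  have : N - (k + 1) = d + 1 := by omega
  rw [this, Nat.factorial_succ]
lemma main_count {N : ℕ} (d : ℕ) : ∀ (f : Fin N → Fin N) (s : Finset (Fin N)),
    Set.InjOn f ↑s → ¬ HasCycle f s → s.card + 1 + d = N →
    Nat.card {σ : Equiv.Perm (Fin N) // IsCyclus σ ∧ ∀ x ∈ s, σ x = f x}
      = Nat.factorial d := by
  induction d with
  | zero =>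
    intro f s hinj hnc hcard
    simpa using main_base f s hinj hnc (by omega)
  | succ d ih =>
    intro f s hinj hnc hcard
    exact main_step ih f s hinj hnc hcard

/-- A partial injection on `{0,…,N−1}` with domain of size `k` and no cycles has exactly
`(N−k−1)!` extensions to a cyclus of `{0,…,N−1}`. -/
theorem stmt_4 (N k : ℕ) (hN : 1 ≤ N) (f : Fin N → Fin N) (s : Finset (Fin N))
    (hinj : Set.InjOn f ↑s) (hcard : s.card = k) (hnc : ¬ HasCycle f s) :
    Nat.card {σ : Equiv.Perm (Fin N) // IsCyclus σ ∧ ∀ x ∈ s, σ x = f x}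
      = Nat.factorial (N - k - 1) := by
  subst hcard
  have hlt : s.card < N := card_lt_of_noCycle hN hinj hnc
  have : s.card + 1 + (N - s.card - 1) = N := by omega
  exact main_count (N - s.card - 1) f s hinj hnc this
end

section
/- Let (f, s) be a partial injection on {0,…,N−1} with s a proper subset of {0,…,N−1}. Then there exists a cyclus σ of {0,…,N−1} with σ(x) = f(x) for all x ∈ s if and only if (f, s) has no cycles. -/
lemma forward_dir {N : ℕ} (f : Fin N → Fin N) (s : Finset (Fin N))
    (hproper : s ≠ Finset.univ) (σ : Equiv.Perm (Fin N)) (hcyc : IsCyclus σ)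
    (hagree : ∀ x ∈ s, σ x = f x) : ¬ HasCycle f s := by
  rintro ⟨x, hx, n, hn1, hmem, hret⟩
  have hiter : ∀ j ≤ n, (σ ^ j) x = f^[j] x := by
    intro j hj
    induction j with
    | zero => simp
    | succ k ih =>
      have hk : k < n := lt_of_lt_of_le (Nat.lt_succ_self k) hj
      have h1 : (σ ^ k) x = f^[k] x := ih (le_of_lt hk)
      have h2 : f^[k] x ∈ s := hmem k hk
      rw [pow_succ', Equiv.Perm.mul_apply, h1, hagree _ h2, Function.iterate_succ_apply']
  have hsn : (σ ^ n) x = x := by rw [hiter n le_rfl, hret]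
  have hmul : ∀ q, (σ ^ (n * q)) x = x := by
    intro q
    induction q with
    | zero => simp
    | succ k ih => rw [Nat.mul_succ, pow_add, Equiv.Perm.mul_apply, hsn, ih]
  have horb : ∀ m, (σ ^ m) x ∈ s := by
    intro m
    have hm : m % n + n * (m / n) = m := Nat.mod_add_div m n
    have hlt : m % n < n := Nat.mod_lt _ hn1
    have : (σ ^ m) x = f^[m % n] x := by
      conv_lhs => rw [← hm]
      rw [pow_add, Equiv.Perm.mul_apply, hmul, hiter _ (le_of_lt hlt)]
    rw [this]
    exact hmem _ hlt
  obtain ⟨y, hy⟩ : ∃ y, y ∉ s := by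
    by_contra h
    push_neg at h
    exact hproper (Finset.eq_univ_iff_forall.mpr h)
  obtain ⟨m, hm⟩ := hcyc x y
  exact hy (hm ▸ horb m)

lemma complete_cyclus {N : ℕ} (f : Fin N → Fin N) (s : Finset (Fin N)) (a : Fin N)
    (hinj : Set.InjOn f ↑s) (hsa : sᶜ = {a}) (hnc : ¬ HasCycle f s) :
    ∃ σ : Equiv.Perm (Fin N), IsCyclus σ ∧ ∀ x ∈ s, σ x = f x := by
  classical
  have ha : a ∉ s := by
    have : a ∈ sᶜ := by rw [hsa]; exact Finset.mem_singleton_self a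
    simpa using this
  set t : Finset (Fin N) := s.image f with ht
  have htcard : t.card = s.card := Finset.card_image_of_injOn hinj
  have htc : tᶜ.card = 1 := by
    have h1 : sᶜ.card = 1 := by rw [hsa]; simp
    have h2 := Finset.card_compl (α := Fin N) s
    have h3 := Finset.card_compl (α := Fin N) t
    have h4 : s.card ≤ Fintype.card (Fin N) := Finset.card_le_univ s
    omega
  obtain ⟨c, hc⟩ := Finset.card_eq_one.mp htc
  have hcnt : c ∉ t := by
    have : c ∈ tᶜ := by rw [hc]; exact Finset.mem_singleton_self c
    simpa using this
  set g : Fin N → Fin N := fun x => if x ∈ s then f x else c with hg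
  have hginj : Function.Injective g := by
    intro x y hxy
    by_cases hx : x ∈ s <;> by_cases hy : y ∈ s <;> simp only [hg, hx, hy, if_pos, if_neg,
      if_true, if_false] at hxy
    · exact hinj hx hy hxy
    · exact absurd (hxy ▸ Finset.mem_image_of_mem f hx) hcnt
    · exact absurd (hxy ▸ Finset.mem_image_of_mem f hy) hcnt
    · have hx' : x ∈ sᶜ := Finset.mem_compl.mpr hx
      have hy' : y ∈ sᶜ := Finset.mem_compl.mpr hy
      rw [hsa, Finset.mem_singleton] at hx' hy'
      rw [hx', hy']
  let σ : Equiv.Perm (Fin N) := Equiv.ofBijective g (Finite.injective_iff_bijective.mp hginj)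
  have hσ : ∀ x, σ x = g x := fun x => rfl
  have hagree : ∀ x ∈ s, σ x = f x := by
    intro x hx; rw [hσ, hg]; simp [hx]
  -- every point is on the same cycle as a
  have hsame : ∀ x : Fin N, σ.SameCycle a x := by
    intro x
    by_contra hns
    have hnot : ∀ m : ℕ, (σ ^ m) x ≠ a := by
      intro m hma
      exact hns ⟨-(m : ℤ), by rw [zpow_neg, zpow_natCast, ← hma]; simp⟩
    have hmem : ∀ m : ℕ, (σ ^ m) x ∈ s := by
      intro m
      by_contra h
      have : (σ ^ m) x ∈ sᶜ := Finset.mem_compl.mpr h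
      rw [hsa, Finset.mem_singleton] at this
      exact hnot m this
    have hiter : ∀ m : ℕ, (σ ^ m) x = f^[m] x := by
      intro m
      induction m with
      | zero => simp
      | succ k ih =>
        rw [pow_succ', Equiv.Perm.mul_apply, ih, Function.iterate_succ_apply', ← ih,
          ← hagree _ (hmem k)]
    have hn1 : 1 ≤ orderOf σ := orderOf_pos σ
    refine hnc ⟨x, by simpa using hmem 0, orderOf σ, hn1, fun j _ => by rw [← hiter]; exact hmem j, ?_⟩
    rw [← hiter, pow_orderOf_eq_one]; rfl
  refine ⟨σ, fun x y => ?_, hagree⟩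
  have hxy : σ.SameCycle x y := (hsame x).symm.trans (hsame y)
  obtain ⟨i, _, hi⟩ := hxy.exists_pow_eq'
  exact ⟨i, hi⟩

-- chains in s ending at a are suffixes of each other
lemma chain_suffix {N : ℕ} (f : Fin N → Fin N) (s : Finset (Fin N)) (a : Fin N)
    (hinj : Set.InjOn f ↑s) {b₁ b₂ : Fin N} {k₁ k₂ : ℕ}
    (hc₁ : ∀ j < k₁, f^[j] b₁ ∈ s) (he₁ : f^[k₁] b₁ = a)
    (hc₂ : ∀ j < k₂, f^[j] b₂ ∈ s) (he₂ : f^[k₂] b₂ = a)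
    (hle : k₁ ≤ k₂) : f^[k₂ - k₁] b₂ = b₁ := by
  have key : ∀ j, j ≤ k₁ → f^[k₁ - j] b₁ = f^[k₂ - j] b₂ := by
    intro j hj
    induction j with
    | zero => simp [he₁, he₂]
    | succ i ih =>
      have hik : i ≤ k₁ := le_of_lt hj
      have hprev := ih hik
      have h1 : k₁ - i = (k₁ - (i+1)) + 1 := by omega
      have h2 : k₂ - i = (k₂ - (i+1)) + 1 := by omega
      rw [h1, h2, Function.iterate_succ_apply', Function.iterate_succ_apply'] at hprev
      have hm1 : f^[k₁ - (i+1)] b₁ ∈ s := hc₁ _ (by omega)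
      have hm2 : f^[k₂ - (i+1)] b₂ ∈ s := hc₂ _ (by omega)
      exact (hinj hm1 hm2 hprev).symm ▸ rfl
  have := key k₁ le_rfl
  simpa using this.symm

lemma chain_unique {N : ℕ} (f : Fin N → Fin N) (s : Finset (Fin N)) (a : Fin N)
    (hinj : Set.InjOn f ↑s) {b₁ b₂ : Fin N} {k₁ k₂ : ℕ}
    (hb₁ : b₁ ∉ s.image f) (hb₂ : b₂ ∉ s.image f)
    (hc₁ : ∀ j < k₁, f^[j] b₁ ∈ s) (he₁ : f^[k₁] b₁ = a)
    (hc₂ : ∀ j < k₂, f^[j] b₂ ∈ s) (he₂ : f^[k₂] b₂ = a) : b₁ = b₂ := by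
  rcases le_total k₁ k₂ with h | h
  · have := chain_suffix f s a hinj hc₁ he₁ hc₂ he₂ h
    rcases Nat.eq_or_lt_of_le h with heq | hlt
    · subst heq; simpa using this.symm
    · exfalso
      have hd : k₂ - k₁ = (k₂ - k₁ - 1) + 1 := by omega
      rw [hd, Function.iterate_succ_apply'] at this
      exact hb₁ (this ▸ Finset.mem_image_of_mem f (hc₂ _ (by omega)))
  · have := chain_suffix f s a hinj hc₂ he₂ hc₁ he₁ h
    rcases Nat.eq_or_lt_of_le h with heq | hlt
    · subst heq; simpa using this
    · exfalso
      have hd : k₁ - k₂ = (k₁ - k₂ - 1) + 1 := by omega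
      rw [hd, Function.iterate_succ_apply'] at this
      exact hb₂ (this ▸ Finset.mem_image_of_mem f (hc₁ _ (by omega)))

lemma extend_step {N : ℕ} (f : Fin N → Fin N) (s : Finset (Fin N)) (a : Fin N)
    (hinj : Set.InjOn f ↑s) (ha : a ∉ s) (hcard : s.card + 2 ≤ N)
    (hnc : ¬ HasCycle f s) :
    ∃ b : Fin N, Set.InjOn (Function.update f a b) ↑(insert a s) ∧
      ¬ HasCycle (Function.update f a b) (insert a s) := by
  classical
  set t : Finset (Fin N) := s.image f with ht
  set R : Finset (Fin N) :=
    Finset.univ.filter (fun b => ∃ k, (∀ j < k, f^[j] b ∈ s) ∧ f^[k] b = a) with hR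
  have hRcard : (R \ t).card ≤ 1 := by
    refine Finset.card_le_one.mpr ?_
    intro b₁ hb₁ b₂ hb₂
    rw [Finset.mem_sdiff, hR, Finset.mem_filter] at hb₁ hb₂
    obtain ⟨⟨_, k₁, hc₁, he₁⟩, hn₁⟩ := hb₁
    obtain ⟨⟨_, k₂, hc₂, he₂⟩, hn₂⟩ := hb₂
    exact chain_unique f s a hinj hn₁ hn₂ hc₁ he₁ hc₂ he₂
  have hbad : (t ∪ (R \ t)).card < N := by
    have h1 : t.card = s.card := Finset.card_image_of_injOn hinj
    have h2 : (t ∪ (R \ t)).card ≤ t.card + (R \ t).card := Finset.card_union_le _ _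
    omega
  obtain ⟨b, hb⟩ : ∃ b : Fin N, b ∉ t ∪ (R \ t) := by
    by_contra h
    push_neg at h
    have h1 : Finset.univ ⊆ t ∪ (R \ t) := fun x _ => h x
    have h2 := Finset.card_le_card h1
    rw [Finset.card_univ, Fintype.card_fin] at h2
    omega
  have hbt : b ∉ t := fun h => hb (Finset.mem_union_left _ h)
  have hbR : b ∉ R := fun h =>
    hb (Finset.mem_union_right _ (Finset.mem_sdiff.mpr ⟨h, hbt⟩))
  set f' : Fin N → Fin N := Function.update f a b with hf'
  have hf'a : f' a = b := Function.update_self a b f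
  have hf's : ∀ x ∈ s, f' x = f x := by
    intro x hx
    have hxa : x ≠ a := fun h => ha (h ▸ hx)
    rw [hf']
    exact Function.update_of_ne hxa b f
  refine ⟨b, ?_, ?_⟩
  · -- injectivity
    rw [← hf']
    intro x hx y hy hxy
    have hx' : x = a ∨ x ∈ s := by simpa using hx
    have hy' : y = a ∨ y ∈ s := by simpa using hy
    rcases hx' with hxa | hxs <;> rcases hy' with hya | hys
    · rw [hxa, hya]
    · exfalso; rw [hxa, hf'a, hf's y hys] at hxy
      exact hbt (hxy ▸ Finset.mem_image_of_mem f hys)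
    · exfalso; rw [hya, hf'a, hf's x hxs] at hxy
      exact hbt (hxy.symm ▸ Finset.mem_image_of_mem f hxs)
    · exact hinj hxs hys (by rwa [hf's x hxs, hf's y hys] at hxy)
  · -- no cycle
    rw [← hf']
    rintro ⟨x, hx, n, hn1, hmem, hret⟩
    by_cases hA : ∀ j < n, f'^[j] x ≠ a
    · -- cycle avoids a : gives a cycle of f in s
      have hmem' : ∀ j < n, f'^[j] x ∈ s := by
        intro j hj
        rcases Finset.mem_insert.mp (hmem j hj) with h | h
        · exact absurd h (hA j hj)
        · exact h
      have hiter : ∀ j ≤ n, f'^[j] x = f^[j] x := by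
        intro j hj
        induction j with
        | zero => rfl
        | succ k ih =>
          have hk : k < n := lt_of_lt_of_le (Nat.lt_succ_self k) hj
          rw [Function.iterate_succ_apply', Function.iterate_succ_apply',
            hf's _ (hmem' k hk), ih (le_of_lt hk)]
      refine hnc ⟨x, ?_, n, hn1, fun j hj => (hiter j (le_of_lt hj)) ▸ hmem' j hj,
        (hiter n le_rfl) ▸ hret⟩
      have := hmem' 0 (by omega)
      simpa using this
    · -- cycle passes through a ⇒ b reaches a inside s, contradicting b ∉ R
      push_neg at hA
      obtain ⟨j₀, hj₀n, hj₀⟩ := hA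
      have key : ∀ j, f'^[j] a = f'^[j + j₀] x := by
        intro j
        rw [← hj₀, ← Function.iterate_add_apply]
      have hreta : f'^[n] a = a := by
        rw [key n, Nat.add_comm, Function.iterate_add_apply, hret, hj₀]
      have hmema : ∀ j < n, f'^[j] a ∈ insert a s := by
        intro j hj
        rw [key j]
        by_cases hjn : j + j₀ < n
        · exact hmem _ hjn
        · have h2 : j + j₀ - n < n := by omega
          have hsplit : j + j₀ = (j + j₀ - n) + n := by omega
          rw [hsplit, Function.iterate_add_apply, hret]
          exact hmem _ h2
      have hex : ∃ m, f'^[m + 1] a = a := by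
        refine ⟨n - 1, ?_⟩
        have hn : n - 1 + 1 = n := by omega
        rw [hn]; exact hreta
      set m := Nat.find hex with hm
      have hma : f'^[m + 1] a = a := Nat.find_spec hex
      have hmlt : m ≤ n - 1 := by
        refine Nat.find_le ?_
        have hn : n - 1 + 1 = n := by omega
        rw [hn]; exact hreta
      have hne : ∀ j, 1 ≤ j → j ≤ m → f'^[j] a ≠ a := by
        intro j h1 h2 hja
        have hj' : j - 1 + 1 = j := by omega
        have : f'^[j - 1 + 1] a = a := by rw [hj']; exact hja
        exact absurd this (Nat.find_min hex (by omega))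
      have hmems : ∀ j, 1 ≤ j → j ≤ m → f'^[j] a ∈ s := by
        intro j h1 h2
        rcases Finset.mem_insert.mp (hmema j (by omega)) with h | h
        · exact absurd h (hne j h1 h2)
        · exact h
      have hchain : ∀ j ≤ m, f^[j] b = f'^[j + 1] a := by
        intro j hj
        induction j with
        | zero => simpa using hf'a.symm
        | succ k ih =>
          have hk : k ≤ m := le_of_lt (Nat.lt_of_succ_le hj)
          rw [Function.iterate_succ_apply', ih hk, ← hf's _ (hmems (k + 1) (by omega) hj)]
          exact (Function.iterate_succ_apply' f' (k + 1) a).symm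
      refine hbR ?_
      rw [hR, Finset.mem_filter]
      refine ⟨Finset.mem_univ b, m, fun j hj => ?_, ?_⟩
      · rw [hchain j (le_of_lt hj)]
        exact hmems (j + 1) (by omega) (by omega)
      · rw [hchain m le_rfl, hma]

lemma build {N : ℕ} : ∀ (k : ℕ) (f : Fin N → Fin N) (s : Finset (Fin N)),
    Set.InjOn f ↑s → sᶜ.card = k + 1 → ¬ HasCycle f s →
    ∃ σ : Equiv.Perm (Fin N), IsCyclus σ ∧ ∀ x ∈ s, σ x = f x := by
  intro k
  induction k with
  | zero =>
    intro f s hinj hc hnc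
    obtain ⟨a, ha⟩ := Finset.card_eq_one.mp hc
    exact complete_cyclus f s a hinj ha hnc
  | succ k ih =>
    intro f s hinj hc hnc
    classical
    obtain ⟨a, ha⟩ : ∃ a, a ∈ sᶜ := Finset.card_pos.mp (by omega)
    have has : a ∉ s := Finset.mem_compl.mp ha
    have hcard : s.card + 2 ≤ N := by
      have h1 := Finset.card_compl (α := Fin N) s
      rw [Fintype.card_fin] at h1
      have h2 : s.card ≤ N := by
        have h3 := Finset.card_le_univ s
        simpa using h3
      omega
    obtain ⟨b, hinj', hnc'⟩ := extend_step f s a hinj has hcard hnc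
    have hc' : (insert a s)ᶜ.card = k + 1 := by
      rw [Finset.compl_insert, Finset.card_erase_of_mem ha, hc]
      omega
    obtain ⟨σ, hσ, hagree⟩ := ih (Function.update f a b) (insert a s) hinj' hc' hnc'
    refine ⟨σ, hσ, fun x hx => ?_⟩
    rw [hagree x (Finset.mem_insert_of_mem hx)]
    have hxa : x ≠ a := fun h => has (h ▸ hx)
    exact Function.update_of_ne hxa b f

/-- A partial injection `(f, s)` with `s` a proper subset of `{0,…,N−1}` extends to a
cyclus if and only if it has no cycles. -/
theorem stmt_5 (N : ℕ) (f : Fin N → Fin N) (s : Finset (Fin N))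
    (hinj : Set.InjOn f ↑s) (hproper : s ≠ Finset.univ) :
    (∃ σ : Equiv.Perm (Fin N), IsCyclus σ ∧ ∀ x ∈ s, σ x = f x) ↔ ¬ HasCycle f s := by
  constructor
  · rintro ⟨σ, hcyc, hagree⟩
    exact forward_dir f s hproper σ hcyc hagree
  · intro hnc
    have hpos : 1 ≤ sᶜ.card := by
      rw [Nat.one_le_iff_ne_zero]
      intro h
      rw [Finset.card_eq_zero] at h
      exact hproper (by simpa using congrArg compl h)
    have : sᶜ.card = (sᶜ.card - 1) + 1 := by omega
    exact build (sᶜ.card - 1) f s hinj this hnc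
end

section
/- Let (f, s) be a partial injection on {0,…,N−1} with no cycles, let x ∉ s, and let y be outside the image f(s). Let (g, s ∪ {x}) be the partial injection extending (f, s) by g(x) = y. Then (g, s ∪ {x}) is again a partial injection, and it has a cycle if and only if there exists n ≥ 0 such that f^j(y) ∈ s for all 0 ≤ j < n and f^n(y) = x (the case n = 0 meaning y = x). -/
/-- Extending a cycle-free partial injection `(f, s)` by mapping a new point `x ∉ s` to a
point `y` outside the image `f(s)` yields again a partial injection, and the extension has
a cycle if and only if iterating `f` from `y` (staying inside `s`) eventually reaches `x`
(the case of `0` iterations meaning `y = x`). -/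
theorem stmt_6 (N : ℕ) (f : Fin N → Fin N) (s : Finset (Fin N))
    (hinj : Set.InjOn f ↑s) (hnc : ¬ HasCycle f s)
    (x y : Fin N) (hx : x ∉ s) (hy : y ∉ f '' ↑s) :
    Set.InjOn (Function.update f x y) ↑(insert x s) ∧
    (HasCycle (Function.update f x y) (insert x s) ↔
      ∃ n : ℕ, (∀ j < n, f^[j] y ∈ s) ∧ f^[n] y = x) := by
  classical
  set g := Function.update f x y with hgdef
  have hgx : g x = y := Function.update_self x y f
  have hgs : ∀ z : Fin N, z ∈ s → g z = f z := by
    intro z hz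
    exact Function.update_of_ne (by rintro rfl; exact hx hz) _ _
  have hyf : ∀ z ∈ s, f z ≠ y := by
    intro z hz h; exact hy ⟨z, hz, h⟩
  -- agreement of iterates when f-iterates stay in s
  have agree : ∀ (m : ℕ) (z : Fin N), (∀ j < m, f^[j] z ∈ s) → g^[m] z = f^[m] z := by
    intro m
    induction m with
    | zero => intro z _; rfl
    | succ k ih =>
      intro z h
      rw [Function.iterate_succ_apply', Function.iterate_succ_apply',
        ih z (fun j hj => h j (Nat.lt_succ_of_lt hj)), hgs _ (h k (Nat.lt_succ_self k))]
  -- agreement of iterates when g-iterates stay in s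
  have agree2 : ∀ (m : ℕ) (z : Fin N), (∀ j < m, g^[j] z ∈ s) → ∀ j ≤ m, g^[j] z = f^[j] z := by
    intro m z h j hj
    induction j with
    | zero => rfl
    | succ k ih =>
      rw [Function.iterate_succ_apply', Function.iterate_succ_apply',
        ← ih (Nat.le_of_succ_le hj), hgs _ (h k (Nat.lt_of_lt_of_le (Nat.lt_succ_self k) hj))]
  constructor
  · -- injectivity
    intro a ha b hb hab
    simp only [Finset.coe_insert, Set.mem_insert_iff, Finset.mem_coe] at ha hb
    rcases ha with rfl | ha <;> rcases hb with rfl | hb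
    · rfl
    · exfalso
      apply hyf b hb
      rw [← hgs b hb, ← hab, hgx]
    · exfalso
      apply hyf a ha
      rw [← hgs a ha, hab, hgx]
    · exact hinj ha hb (by rwa [hgs a ha, hgs b hb] at hab)
  constructor
  · -- cycle implies path from y to x
    rintro ⟨z, hz, m, hm1, hjm, hmz⟩
    -- the cycle must pass through x
    have hex : ∃ j, j < m ∧ g^[j] z = x := by
      by_contra hc
      push_neg at hc
      have hs' : ∀ j < m, g^[j] z ∈ s := by
        intro j hj
        have := hjm j hj
        rcases Finset.mem_insert.1 this with h | h
        · exact absurd h (hc j hj)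
        · exact h
      apply hnc
      refine ⟨z, ?_, m, hm1, ?_, ?_⟩
      · have := hs' 0 hm1; simpa using this
      · intro j hj
        rw [← agree2 m z hs' j (le_of_lt hj)]
        exact hs' j hj
      · rw [← agree2 m z hs' m le_rfl]; exact hmz
    obtain ⟨j, hjlt, hjx⟩ := hex
    -- g^[m] x = x
    have hmx : g^[m] x = x := by
      rw [← hjx, ← Function.iterate_add_apply, add_comm, Function.iterate_add_apply, hmz]
    -- intermediates of the cycle at x lie in insert x s
    have hint : ∀ k < m, g^[k] x ∈ insert x s := by
      intro k hk
      have e : g^[k] x = g^[k+j] z := by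
        rw [← hjx]; exact (Function.iterate_add_apply g k j z).symm
      rw [e]
      by_cases hkj : k + j < m
      · exact hjm _ hkj
      · push_neg at hkj
        have h1 : k + j = (k + j - m) + m := (Nat.sub_add_cancel hkj).symm
        rw [h1, Function.iterate_add_apply, hmz]
        have h2 : k + j - m < m := by omega
        exact hjm _ h2
    -- minimal return time
    have hexm : ∃ k, 1 ≤ k ∧ g^[k] x = x := ⟨m, hm1, hmx⟩
    set m' := Nat.find hexm with hm'def
    obtain ⟨hm'1, hm'x⟩ := Nat.find_spec hexm
    have hm'le : m' ≤ m := Nat.find_le ⟨hm1, hmx⟩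
    have hmin : ∀ k, 1 ≤ k → k < m' → g^[k] x ≠ x := by
      intro k hk1 hkm h
      exact Nat.find_min hexm hkm ⟨hk1, h⟩
    have hins : ∀ k, 1 ≤ k → k < m' → g^[k] x ∈ s := by
      intro k hk1 hkm
      have := hint k (lt_of_lt_of_le hkm hm'le)
      rcases Finset.mem_insert.1 this with h | h
      · exact absurd h (hmin k hk1 hkm)
      · exact h
    -- g^[j+1] x = f^[j] y for j+1 ≤ m'
    have hiter : ∀ j, j + 1 ≤ m' → g^[j+1] x = f^[j] y := by
      intro j
      induction j with
      | zero => intro _; simpa using hgx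
      | succ k ih =>
        intro hj
        rw [Function.iterate_succ_apply' g, ih (by omega), Function.iterate_succ_apply' f]
        exact hgs _ (ih (by omega) ▸ hins (k+1) (by omega) (by omega))
    refine ⟨m' - 1, ?_, ?_⟩
    · intro j hj
      rw [← hiter j (by omega)]
      exact hins (j+1) (by omega) (by omega)
    · rw [← hiter (m'-1) (by omega)]
      have : m' - 1 + 1 = m' := by omega
      rw [this, hm'x]
  · -- path from y to x implies cycle
    rintro ⟨n, hjs, hn⟩
    refine ⟨x, Finset.mem_insert_self x s, n + 1, Nat.succ_le_succ (Nat.zero_le n), ?_, ?_⟩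
    · intro j hj
      cases j with
      | zero => simp
      | succ k =>
        have hk : k < n := Nat.lt_of_succ_lt_succ hj
        rw [Function.iterate_succ_apply, hgx,
          agree k y (fun i hi => hjs i (lt_trans hi hk))]
        exact Finset.mem_insert_of_mem (hjs k hk)
    · rw [Function.iterate_succ_apply, hgx, agree n y hjs, hn]
end

section
/- Let N ≥ 1 and let (a_0,…,a_{k−1}) be a sequence of positive integers with a_0+⋯+a_{k−1} = N, with partial sums s_{−1} = 0 and s_i = a_0+⋯+a_i. Then the number of permutations σ of {0,…,N−1} with OCS(σ) = (a_0,…,a_{k−1}) equals N! / ∏_{i=0}^{k−1}(N − s_{i−1}). Equivalently, the ordered cycle structure of a uniformly random permutation of {0,…,N−1} has the same distribution as the output of the following process: set s_{−1} = 0, repeatedly choose s_i uniformly at random from {s_{i−1}+1,…,N} until s_i = N, and output the sequence of successive differences. -/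
/-!
Work with permutations of an arbitrary finite linear order and let `b` be its least element.
The cycle of `b` comes first in the ordered cycle structure, and the rest of the structure is that
of `σ` restricted to the complement of this cycle. So a permutation with ordered cycle structure
`(a, L)` amounts to an injective tuple `(b, σ b, …, σ^(a-1) b)`, of which there are
`(N-1)(N-2)⋯(N-a+1)`, together with a permutation of the remaining `N - a` points with ordered
cycle structure `L`. Induction on the list gives
`#{σ | OCS σ = (a_0,…,a_{k-1})} · ∏ᵢ (a_i + ⋯ + a_{k-1}) = N!`.
-/

/-- The set of minimal elements of the cycles of a permutation of `Fin N`
(one per cycle, fixed points included). -/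
noncomputable def cycleMins {N : ℕ} (σ : Equiv.Perm (Fin N)) : Finset (Fin N) :=
  @Finset.filter _ (fun x => ∀ m : ℕ, x ≤ (σ ^ m) x) (Classical.decPred _) Finset.univ

/-- The ordered cycle structure of a permutation of `Fin N`: the list of lengths of its
cycles (fixed points counting as cycles of length 1), listed in increasing order of the
minimal elements of the cycles. -/
noncomputable def OCS {N : ℕ} (σ : Equiv.Perm (Fin N)) : List ℕ :=
  ((cycleMins σ).sort (· ≤ ·)).map fun x => Function.minimalPeriod (⇑σ) x

open Function Fin.NatCast
open scoped Nat

theorem Function.Semiconj.minimalPeriod_eq {α β : Type*} {f : α → α} {g : β → β} {e : α → β}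
    (h : Semiconj e f g) (he : Injective e) (x : α) :
    minimalPeriod g (e x) = minimalPeriod f x :=
  minimalPeriod_eq_minimalPeriod_iff.2 fun n => by
    simp only [IsPeriodicPt, IsFixedPt, ← h.iterate_right n x, he.eq_iff]

theorem card_embedding_fin_succ_apply_zero_eq {α : Type*} [Fintype α] (n : ℕ) (b : α) :
    Nat.card {e : Fin (n + 1) ↪ α // e 0 = b} = (Nat.card α - 1).descFactorial n := by
  classical
  let avoid : {p : Σ f : Fin n ↪ α, {i // i ∉ Set.range f} // p.2.1 = b} ≃
      {f : Fin n ↪ α // ∀ i, f i ∈ ({b}ᶜ : Set α)} :=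
    { toFun p := ⟨p.1.1, fun i hi => p.1.2.2 ⟨i, hi.trans p.2.symm⟩⟩
      invFun f := ⟨⟨f.1, b, fun ⟨i, hi⟩ => f.2 i hi⟩, rfl⟩
      left_inv := by rintro ⟨⟨f, i, hi⟩, rfl⟩; rfl
      right_inv _ := rfl }
  rw [Nat.card_congr <|
      ((Equiv.embeddingFinSucc n α).subtypeEquiv (p := fun e => e 0 = b) fun _ => Iff.rfl).trans
        (avoid.trans (Equiv.codRestrict _ _)),
    Nat.card_eq_fintype_card, Fintype.card_embedding_eq]
  simp [Nat.card_eq_fintype_card, Finset.filter_ne', Finset.card_univ]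

namespace Equiv.Perm

section OrderedCycleType

variable {α : Type*} [Fintype α] [LinearOrder α]

-- Stated exactly as `cycleMins` and `OCS`, so that `OCS σ = σ.orderedCycleType` is `rfl`.
noncomputable def cycleMinima (σ : Perm α) : Finset α :=
  @Finset.filter _ (fun x => ∀ m : ℕ, x ≤ (σ ^ m) x) (Classical.decPred _) Finset.univ

noncomputable def orderedCycleType (σ : Perm α) : List ℕ :=
  (σ.cycleMinima.sort (· ≤ ·)).map fun x => minimalPeriod σ x

theorem _root_.OCS_eq_orderedCycleType {N : ℕ} (σ : Perm (Fin N)) :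
    OCS σ = σ.orderedCycleType :=
  rfl

theorem mem_cycleMinima {σ : Perm α} {x : α} :
    x ∈ σ.cycleMinima ↔ ∀ y, σ.SameCycle x y → x ≤ y := by
  simp only [cycleMinima, Finset.mem_filter, Finset.mem_univ, true_and]
  refine ⟨fun hx y hy => ?_, fun hx m => hx _ (sameCycle_pow_right.2 (SameCycle.refl σ x))⟩
  obtain ⟨m, rfl⟩ := hy.exists_nat_pow_eq
  exact hx m

theorem orderedCycleType_of_isEmpty [IsEmpty α] (σ : Perm α) : σ.orderedCycleType = [] := by
  simp [orderedCycleType, Finset.eq_empty_of_isEmpty σ.cycleMinima]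

section Restriction

variable {σ : Perm α} {b : α} {p : α → Prop} [Fintype {x // p x}]

theorem cycleMinima_eq_cons (hb : ∀ x, b ≤ x) (hp : ∀ x, p x ↔ ¬ σ.SameCycle b x)
    (h : ∀ x, p (σ x) ↔ p x) :
    σ.cycleMinima = Finset.cons b ((σ.subtypePerm h).cycleMinima.map (Embedding.subtype p))
      (by simp [hp, SameCycle.refl]) := by
  ext x
  simp only [Finset.mem_cons, Finset.mem_map, Embedding.subtype_apply, mem_cycleMinima,
    Subtype.forall, sameCycle_subtypePerm, Subtype.exists, exists_and_right, exists_eq_right]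
  by_cases hbx : σ.SameCycle b x
  · have hx : ¬ p x := by simp [hp, hbx]
    simp only [hx, IsEmpty.exists_iff, or_false]
    exact ⟨fun hmin => le_antisymm (hmin b hbx.symm) (hb x), fun hxb y _ => hxb ▸ hb y⟩
  · have hx : p x := (hp x).2 hbx
    simp only [hx, exists_true_left]
    refine ⟨fun hmin => .inr fun y _ => hmin y, ?_⟩
    rintro (rfl | hmin)
    · exact fun y _ => hb y
    · exact fun y hxy => hmin y ((hp y).2 fun hby => hbx (hby.trans hxy.symm)) hxy

theorem orderedCycleType_eq_cons (hb : ∀ x, b ≤ x) (hp : ∀ x, p x ↔ ¬ σ.SameCycle b x)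
    (h : ∀ x, p (σ x) ↔ p x) :
    σ.orderedCycleType = minimalPeriod σ b :: (σ.subtypePerm h).orderedCycleType := by
  have hval : Semiconj Subtype.val (σ.subtypePerm h) σ := fun _ => rfl
  rw [orderedCycleType, cycleMinima_eq_cons hb hp h, Finset.sort_cons _ (fun c _ => hb c),
    ← Subtype.strictMono_coe p |>.strictMonoOn _ |>.map_finsetSort, List.map_cons,
    List.map_map, orderedCycleType]
  congr 2
  funext y
  exact hval.minimalPeriod_eq Subtype.val_injective y

end Restriction

theorem minimalPeriod_eq_head_orderedCycleType {σ : Perm α} {b : α} (hb : ∀ x, b ≤ x)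
    {a : ℕ} {L : List ℕ} (h : σ.orderedCycleType = a :: L) : minimalPeriod σ b = a := by
  classical
  rw [orderedCycleType_eq_cons hb (p := fun x => ¬ σ.SameCycle b x) (fun _ => Iff.rfl)
    (fun _ => sameCycle_apply_right.not)] at h
  exact (List.cons.inj h).1

end OrderedCycleType

section CycleThrough

variable {α : Type*} {n : ℕ} (e : Fin (n + 1) ↪ α) {σ : Perm α}

-- `(k : Fin (n + 1))` is `k mod (n + 1)`: the hypothesis `he` below says that `e` lists the
-- cycle of `e 0`, which has length `n + 1`.
theorem minimalPeriod_eq_of_pow_apply (he : ∀ k : ℕ, (σ ^ k) (e 0) = e (k : Fin (n + 1))) :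
    minimalPeriod σ (e 0) = n + 1 := by
  have key : ∀ k, IsPeriodicPt σ k (e 0) ↔ n + 1 ∣ k := fun k => by
    rw [IsPeriodicPt, IsFixedPt, iterate_eq_pow, he, e.injective.eq_iff, Fin.natCast_eq_zero]
  exact Nat.dvd_antisymm (isPeriodicPt_iff_minimalPeriod_dvd.1 ((key _).2 dvd_rfl))
    ((key _).1 (isPeriodicPt_minimalPeriod _ _))

variable [Finite α]

theorem sameCycle_iff_mem_range (he : ∀ k : ℕ, (σ ^ k) (e 0) = e (k : Fin (n + 1))) {x : α} :
    σ.SameCycle (e 0) x ↔ x ∈ Set.range e := by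
  refine ⟨fun h => ?_, ?_⟩
  · obtain ⟨k, rfl⟩ := h.exists_nat_pow_eq
    exact ⟨(k : Fin (n + 1)), (he k).symm⟩
  · rintro ⟨i, rfl⟩
    simpa [he] using (sameCycle_pow_right (n := i)).2 (SameCycle.refl σ (e 0))

theorem apply_mem_range_iff (he : ∀ k : ℕ, (σ ^ k) (e 0) = e (k : Fin (n + 1))) {x : α} :
    σ x ∈ Set.range e ↔ x ∈ Set.range e := by
  rw [← sameCycle_iff_mem_range e he, ← sameCycle_iff_mem_range e he, sameCycle_apply_right]

noncomputable def permComplRangeEquiv [DecidableEq α] :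
    {σ : Perm α // ∀ k : ℕ, (σ ^ k) (e 0) = e (k : Fin (n + 1))} ≃
      Perm {x // x ∉ Set.range e} where
  toFun σ := σ.1.subtypePerm fun _ => (apply_mem_range_iff e σ.2).not
  invFun τ := ⟨subtypeCongr (e.toEquivRange.permCongr (finRotate (n + 1))) τ, fun k => by
    induction k with
    | zero => simp
    | succ k ih =>
      rw [pow_succ', mul_apply, ih, subtypeCongr.left_apply _ _ (Set.mem_range_self _)]
      simp [permCongr_apply]⟩
  left_inv σ := by
    ext x
    by_cases hx : x ∈ Set.range e
    · obtain ⟨i, rfl⟩ := hx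
      have hstep := σ.2 (i + 1)
      rw [pow_succ', mul_apply, σ.2 i, Fin.cast_val_eq_self] at hstep
      simp [subtypeCongr.left_apply, permCongr_apply, hstep]
    · simp [subtypeCongr.right_apply _ _ hx]
  right_inv τ := by
    ext y
    simp [subtypeCongr.right_apply _ _ y.2]

end CycleThrough

section Orbit

variable {α : Type*} {n : ℕ} {σ : Perm α} {b : α}

def orbitEmbedding (σ : Perm α) (b : α) (h : minimalPeriod σ b = n + 1) : Fin (n + 1) ↪ α :=
  ⟨fun i => (σ ^ (i : ℕ)) b, fun i j hij => Fin.ext <|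
    iterate_injOn_Iio_minimalPeriod (by rw [Set.mem_Iio, h]; exact i.2)
      (by rw [Set.mem_Iio, h]; exact j.2) (by simpa only [iterate_eq_pow])⟩

@[simp]
theorem orbitEmbedding_apply (h : minimalPeriod σ b = n + 1) (i : Fin (n + 1)) :
    orbitEmbedding σ b h i = (σ ^ (i : ℕ)) b :=
  rfl

theorem orbitEmbedding_eq_iff (h : minimalPeriod σ b = n + 1) {e : Fin (n + 1) ↪ α}
    (he : e 0 = b) :
    orbitEmbedding σ b h = e ↔ ∀ k : ℕ, (σ ^ k) (e 0) = e (k : Fin (n + 1)) := by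
  refine ⟨?_, fun hk => DFunLike.ext _ _ fun i => by simpa [← he] using hk i⟩
  rintro rfl k
  have hmod := iterate_mod_minimalPeriod_eq (f := σ) (x := b) (n := k)
  rw [h] at hmod
  simpa [← iterate_eq_pow, Fin.val_natCast] using hmod.symm

end Orbit

section Counting

variable {α : Type*} [Fintype α] [LinearOrder α]

theorem orderedCycleType_eq_cons_permComplRangeEquiv {n : ℕ} (e : Fin (n + 1) ↪ α)
    (hb : ∀ x, e 0 ≤ x) (σ : {σ : Perm α // ∀ k : ℕ, (σ ^ k) (e 0) = e (k : Fin (n + 1))}) :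
    σ.1.orderedCycleType = (n + 1) :: (permComplRangeEquiv e σ).orderedCycleType := by
  have := orderedCycleType_eq_cons hb (fun x => (sameCycle_iff_mem_range e σ.2).not.symm)
    fun _ => (apply_mem_range_iff e σ.2).not
  rwa [minimalPeriod_eq_of_pow_apply e σ.2] at this

theorem card_pow_apply_and_orderedCycleType_eq {n : ℕ} (e : Fin (n + 1) ↪ α)
    (hb : ∀ x, e 0 ≤ x) (L : List ℕ) :
    Nat.card {σ : Perm α //
        (∀ k : ℕ, (σ ^ k) (e 0) = e (k : Fin (n + 1))) ∧ σ.orderedCycleType = (n + 1) :: L} =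
      Nat.card {τ : Perm {x // x ∉ Set.range e} // τ.orderedCycleType = L} :=
  Nat.card_congr <| (subtypeSubtypeEquivSubtypeInter _ _).symm.trans <|
    (permComplRangeEquiv e).subtypeEquiv fun σ => by
      rw [orderedCycleType_eq_cons_permComplRangeEquiv e hb, List.cons.injEq]
      exact and_iff_right rfl

theorem card_orderedCycleType_cons (hb : ∀ x, b ≤ x) (n : ℕ) (L : List ℕ) :
    Nat.card {σ : Perm α // σ.orderedCycleType = (n + 1) :: L} =
      ∑ e : {e : Fin (n + 1) ↪ α // e 0 = b},
        Nat.card {τ : Perm {x // x ∉ Set.range e.1} // τ.orderedCycleType = L} := by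
  let Φ (σ : {σ : Perm α // σ.orderedCycleType = (n + 1) :: L}) :
      {e : Fin (n + 1) ↪ α // e 0 = b} :=
    ⟨orbitEmbedding σ.1 b (minimalPeriod_eq_head_orderedCycleType hb σ.2), by simp⟩
  rw [← Nat.card_congr (sigmaFiberEquiv Φ), Nat.card_sigma]
  refine Finset.sum_congr rfl fun e _ => ?_
  rw [← card_pow_apply_and_orderedCycleType_eq e.1 (by rw [e.2]; exact hb)]
  exact Nat.card_congr
    { toFun σ := ⟨σ.1.1, (orbitEmbedding_eq_iff (minimalPeriod_eq_head_orderedCycleType hb σ.1.2)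
          e.2).1 (congrArg Subtype.val σ.2), σ.1.2⟩
      invFun σ := ⟨⟨σ.1, σ.2.2⟩, Subtype.ext <|
        (orbitEmbedding_eq_iff (minimalPeriod_eq_head_orderedCycleType hb σ.2.2) e.2).2 σ.2.1⟩
      left_inv _ := rfl
      right_inv _ := rfl }

theorem card_orderedCycleType_mul_prod_sum_drop (L : List ℕ) (hL : ∀ a ∈ L, 0 < a)
    (α : Type*) [Fintype α] [LinearOrder α] (hα : Fintype.card α = L.sum) :
    Nat.card {σ : Perm α // σ.orderedCycleType = L} *
      ∏ i ∈ Finset.range L.length, (L.drop i).sum = (Fintype.card α)! := by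
  induction L generalizing α with
  | nil =>
    have : IsEmpty α := Fintype.card_eq_zero_iff.1 hα
    simp [orderedCycleType_of_isEmpty]
  | cons a L ih =>
    obtain ⟨n, rfl⟩ : ∃ n, a = n + 1 := Nat.exists_eq_add_one.2 (hL a List.mem_cons_self)
    have : Nonempty α := Fintype.card_pos_iff.1 (by simp [hα])
    obtain ⟨b, hb⟩ : ∃ b : α, ∀ x, b ≤ x :=
      ⟨Finset.univ.min' Finset.univ_nonempty, fun x => Finset.min'_le _ x (Finset.mem_univ x)⟩
    have hcompl (e : Fin (n + 1) ↪ α) : Fintype.card {x // x ∉ Set.range e} = L.sum := by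
      rw [Fintype.card_subtype_compl, ← Set.toFinset_card, Set.toFinset_range,
        Finset.card_image_of_injective _ e.injective]
      simp [hα]
    have hfiber (e : {e : Fin (n + 1) ↪ α // e 0 = b}) :
        Nat.card {τ : Perm {x // x ∉ Set.range e.1} // τ.orderedCycleType = L} *
          ∏ i ∈ Finset.range L.length, (L.drop i).sum = L.sum ! := by
      rw [← hcompl e.1]
      exact ih (fun a ha => hL a (List.mem_cons_of_mem _ ha)) _ (hcompl e.1)
    rw [card_orderedCycleType_cons hb, List.length_cons, Finset.prod_range_succ', ← mul_assoc,
      Finset.sum_mul]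
    simp only [List.drop_succ_cons, List.drop_zero, hfiber, Finset.sum_const, Finset.card_univ,
      ← Nat.card_eq_fintype_card, card_embedding_fin_succ_apply_zero_eq, smul_eq_mul,
      List.sum_cons]
    rw [Nat.card_eq_fintype_card, hα, List.sum_cons, Nat.add_right_comm, Nat.add_sub_cancel,
      Nat.factorial_succ, ← Nat.factorial_mul_descFactorial (Nat.le_add_right n L.sum),
      Nat.add_sub_cancel_left]
    ring

end Counting

end Equiv.Perm

theorem stmt_8_general (N : ℕ) (L : List ℕ)
    (hpos : ∀ a ∈ L, 0 < a) (hsum : L.sum = N) :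
    Nat.card {σ : Equiv.Perm (Fin N) // OCS σ = L}
        * ∏ i ∈ Finset.range L.length, (N - (L.take i).sum) = Nat.factorial N ∧
    (Nat.card {σ : Equiv.Perm (Fin N) // OCS σ = L} : ℚ) / (Nat.factorial N : ℚ)
        = ∏ i ∈ Finset.range L.length, (1 / ((N : ℚ) - ((L.take i).sum : ℚ))) := by
  have hcount :=
    Equiv.Perm.card_orderedCycleType_mul_prod_sum_drop L hpos (Fin N) (by simp [hsum])
  simp only [← OCS_eq_orderedCycleType, Fintype.card_fin] at hcount
  have hdrop (i : ℕ) : N - (L.take i).sum = (L.drop i).sum := by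
    rw [← hsum, ← List.sum_take_add_sum_drop L i, Nat.add_sub_cancel_left]
  have hdropQ (i : ℕ) : (N : ℚ) - (L.take i).sum = (L.drop i).sum := by
    rw [← hsum, ← List.sum_take_add_sum_drop L i]
    push_cast
    ring
  have hcard : (Nat.card {σ : Equiv.Perm (Fin N) // OCS σ = L} : ℚ) ≠ 0 := by
    exact_mod_cast left_ne_zero_of_mul (hcount ▸ N.factorial_ne_zero)
  refine ⟨by simpa only [hdrop] using hcount, ?_⟩
  rw [← hcount, Nat.cast_mul, Nat.cast_prod, div_mul_cancel_left₀ hcard]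
  simp only [hdropQ, one_div, Finset.prod_inv_distrib]

/-- The number of permutations of `{0,…,N−1}` with ordered cycle structure
`(a_0,…,a_{k−1})` is `N! / ∏_{i<k} (N − s_{i−1})`, where `s_{i−1} = a_0 + ⋯ + a_{i−1}`.
Equivalently, the ordered cycle structure of a uniformly random permutation has the same
distribution as the successive differences produced by repeatedly choosing
`s_i` uniformly in `{s_{i−1}+1,…,N}` until `s_i = N`. -/
theorem stmt_8 (N : ℕ) (hN : 1 ≤ N) (L : List ℕ)
    (hpos : ∀ a ∈ L, 0 < a) (hsum : L.sum = N) :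
    Nat.card {σ : Equiv.Perm (Fin N) // OCS σ = L}
        * ∏ i ∈ Finset.range L.length, (N - (L.take i).sum) = Nat.factorial N ∧
    (Nat.card {σ : Equiv.Perm (Fin N) // OCS σ = L} : ℚ) / (Nat.factorial N : ℚ)
        = ∏ i ∈ Finset.range L.length, (1 / ((N : ℚ) - ((L.take i).sum : ℚ))) :=
  stmt_8_general N L hpos hsum
end

section
/- Fix a real constant c > e. Let p(N) denote the probability that a uniformly random permutation of {0,…,N−1} has more than c·log N cycles (natural logarithm, fixed points counting as cycles). Then p(N) = O(√(log N) / N^{c(log c − 1)}) as N → ∞. -/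
/-!
Chernoff bound with the exponential moment `c ^ (number of cycles)`. Inserting the point `0`
into a permutation of `Fin n` either adds a fixed point or puts `0` into an existing cycle, in
front of one of the `n` points; this gives
`∑ σ, x ^ cycleCount σ = x (x + 1) ⋯ (x + N - 1)`. Hence
`p(N) c ^ (c log N) ≤ ∏ j < N, (c + j) / N! = ∏ j < N, (1 + (c - 1) / (j + 1))`, which is at most
`exp ((c - 1) H_N)`, and `H_N ≤ 1 + log N` gives `p(N) ≤ e ^ (c - 1) N ^ (-1 - c (log c - 1))`.
-/

open Asymptotics Filter

/-- The number of cycles of a permutation of `Fin N`, counting fixed points as cycles of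
length 1 (one cycle per minimal element of a cycle). -/
noncomputable def cycleCount {N : ℕ} (σ : Equiv.Perm (Fin N)) : ℕ :=
  Nat.card {x : Fin N // ∀ m : ℕ, x ≤ (σ ^ m) x}

open Finset Equiv Equiv.Perm

namespace Equiv.Perm

variable {α : Type*} [LinearOrder α]

def IsCycleMin (σ : Perm α) (x : α) : Prop := ∀ m : ℕ, x ≤ (σ ^ m) x

section Finite

variable [Finite α] {σ : Perm α} {x y : α}

theorem isCycleMin_iff : IsCycleMin σ x ↔ ∀ y, σ.SameCycle x y → x ≤ y := by
  refine ⟨fun hx y hxy => ?_, fun hx m => hx _ ⟨m, by simp⟩⟩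
  obtain ⟨m, -, rfl⟩ := hxy.exists_pow_eq'
  exact hx m

theorem IsCycleMin.eq_of_sameCycle (hx : IsCycleMin σ x) (hy : IsCycleMin σ y)
    (hxy : σ.SameCycle x y) : x = y :=
  le_antisymm (isCycleMin_iff.1 hx y hxy) (isCycleMin_iff.1 hy x hxy.symm)

theorem exists_isCycleMin_sameCycle (σ : Perm α) (x : α) :
    ∃ y, σ.SameCycle x y ∧ IsCycleMin σ y := by
  classical
  have := Fintype.ofFinite α
  let s : Finset α := {y | σ.SameCycle x y}
  have hs : s.Nonempty := ⟨x, by simp [s, SameCycle.refl]⟩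
  have hmin : σ.SameCycle x (s.min' hs) := by simpa [s] using s.min'_mem hs
  refine ⟨s.min' hs, hmin, isCycleMin_iff.2 fun z hz => s.min'_le z ?_⟩
  simpa [s] using hmin.trans hz

end Finite

open scoped Classical in
theorem card_isCycleMin_sameCycle [Fintype α] (σ : Perm α) (x : α) :
    #{y | IsCycleMin σ y ∧ σ.SameCycle x y} = 1 := by
  obtain ⟨y, hxy, hy⟩ := exists_isCycleMin_sameCycle σ x
  refine card_eq_one.2
    ⟨y, eq_singleton_iff_unique_mem.2 ⟨by simp [hy, hxy], fun z hz => ?_⟩⟩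
  simp only [mem_filter, mem_univ, true_and] at hz
  exact hz.1.eq_of_sameCycle hy (hz.2.symm.trans hxy)

end Equiv.Perm

open scoped Classical in
theorem cycleCount_eq_card_isCycleMin {N : ℕ} (σ : Perm (Fin N)) :
    cycleCount σ = #{x | IsCycleMin σ x} := by
  rw [cycleCount, Nat.card_eq_fintype_card, Fintype.card_subtype]
  rfl

section decomposeFin

variable {n : ℕ} (τ : Perm (Fin n))

theorem isCycleMin_zero (σ : Perm (Fin (n + 1))) : IsCycleMin σ 0 := fun _ => Fin.zero_le _

theorem decomposeFin_symm_zero_pow_apply_succ (m : ℕ) (y : Fin n) :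
    (decomposeFin.symm (0, τ) ^ m) y.succ = ((τ ^ m) y).succ := by
  induction m with
  | zero => simp
  | succ m ih =>
    rw [pow_succ', Perm.mul_apply, ih, decomposeFin_symm_apply_succ, swap_self, pow_succ',
      Perm.mul_apply, Equiv.refl_apply]

theorem isCycleMin_decomposeFin_symm_zero_succ_iff (y : Fin n) :
    IsCycleMin (decomposeFin.symm (0, τ)) y.succ ↔ IsCycleMin τ y := by
  simp only [IsCycleMin, decomposeFin_symm_zero_pow_apply_succ, Fin.succ_le_succ_iff]

variable (q : Fin n)

theorem decomposeFin_symm_succ_apply_succ (y : Fin n) :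
    decomposeFin.symm (q.succ, τ) y.succ = if τ y = q then 0 else (τ y).succ := by
  rw [decomposeFin_symm_apply_succ]
  split_ifs with h
  · rw [h, swap_apply_right]
  · exact swap_apply_of_ne_of_ne (Fin.succ_ne_zero _) (h ∘ Fin.succ_inj.1)

theorem decomposeFin_symm_succ_pow_apply_succ {y : Fin n} (hy : ¬ τ.SameCycle q y) (m : ℕ) :
    (decomposeFin.symm (q.succ, τ) ^ m) y.succ = ((τ ^ m) y).succ := by
  induction m with
  | zero => simp
  | succ m ih =>
    have hne : τ ((τ ^ m) y) ≠ q := fun h =>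
      hy (SameCycle.symm ⟨(m + 1 : ℕ), by rw [zpow_natCast, pow_succ', Perm.mul_apply, h]⟩)
    rw [pow_succ', Perm.mul_apply, ih, decomposeFin_symm_succ_apply_succ, if_neg hne,
      pow_succ', Perm.mul_apply]

/-- `decomposeFin.symm (q.succ, τ)` inserts `0` into the cycle of `q`, between `τ⁻¹ q`
and `q`. -/
theorem exists_decomposeFin_symm_succ_pow_apply_succ_eq_zero :
    ∀ (i : ℕ) (y : Fin n), (τ ^ i) y = τ⁻¹ q →
      ∃ k : ℕ, (decomposeFin.symm (q.succ, τ) ^ k) y.succ = 0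
  | 0, y, hy => ⟨1, by
      rw [pow_zero, Perm.one_apply] at hy
      rw [pow_one, decomposeFin_symm_succ_apply_succ,
        if_pos (by rw [hy, coe_inv, apply_symm_apply])]⟩
  | i + 1, y, hy => by
    by_cases h : τ y = q
    · exact ⟨1, by rw [pow_one, decomposeFin_symm_succ_apply_succ, if_pos h]⟩
    · obtain ⟨k, hk⟩ := exists_decomposeFin_symm_succ_pow_apply_succ_eq_zero i (τ y)
        (by rwa [← Perm.mul_apply, ← pow_succ])
      exact ⟨k + 1, by
        rw [pow_succ, Perm.mul_apply, decomposeFin_symm_succ_apply_succ, if_neg h, hk]⟩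

theorem isCycleMin_decomposeFin_symm_succ_succ_iff (y : Fin n) :
    IsCycleMin (decomposeFin.symm (q.succ, τ)) y.succ ↔
      IsCycleMin τ y ∧ ¬ τ.SameCycle q y := by
  by_cases hy : τ.SameCycle q y
  · obtain ⟨i, -, hi⟩ := (by simpa only [coe_inv, sameCycle_symm_apply_right] using hy.symm :
      τ.SameCycle y (τ⁻¹ q)).exists_pow_eq'
    obtain ⟨k, hk⟩ := exists_decomposeFin_symm_succ_pow_apply_succ_eq_zero τ q i y hi
    simp only [hy, not_true_eq_false, and_false, iff_false]
    intro hmin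
    exact Fin.succ_ne_zero y (Fin.le_zero_iff.1 (hk ▸ hmin k))
  · simp only [IsCycleMin, decomposeFin_symm_succ_pow_apply_succ τ q hy, Fin.succ_le_succ_iff,
      hy, not_false_eq_true, and_true]

end decomposeFin

open scoped Classical in
theorem cycleCount_decomposeFin_symm {n : ℕ} (p : Fin (n + 1)) (τ : Perm (Fin n)) :
    cycleCount (decomposeFin.symm (p, τ)) = cycleCount τ + if p = 0 then 1 else 0 := by
  rw [cycleCount_eq_card_isCycleMin, Fin.card_filter_univ_succ, if_pos (isCycleMin_zero _),
    cycleCount_eq_card_isCycleMin]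
  cases p using Fin.cases with
  | zero => simp only [isCycleMin_decomposeFin_symm_zero_succ_iff, if_true]
  | succ q =>
    simp only [isCycleMin_decomposeFin_symm_succ_succ_iff, Fin.succ_ne_zero, if_false, add_zero]
    rw [← card_filter_add_card_filter_not (s := {y | IsCycleMin τ y})
      (fun y => τ.SameCycle q y), filter_filter, filter_filter, card_isCycleMin_sameCycle τ q,
      add_comm]

theorem sum_pow_cycleCount {R : Type*} [CommSemiring R] (x : R) (n : ℕ) :
    ∑ σ : Perm (Fin n), x ^ cycleCount σ = ∏ j ∈ range n, (x + j) := by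
  induction n with
  | zero => simp [cycleCount]
  | succ n ih =>
    rw [← decomposeFin.symm.sum_comp, Fintype.sum_prod_type, prod_range_succ, ← ih, mul_comm,
      Fin.sum_univ_succ, add_mul]
    simp [cycleCount_decomposeFin_symm, pow_succ, Fin.succ_ne_zero, mul_sum, mul_comm]

theorem card_cycleCount_gt_mul_rpow_le {c : ℝ} (hc : 1 ≤ c) (t : ℝ) (N : ℕ) :
    (Nat.card {σ : Perm (Fin N) // t < (cycleCount σ : ℝ)} : ℝ) * c ^ t
      ≤ ∏ j ∈ range N, (c + j) := by
  classical
  rw [Nat.card_eq_fintype_card, Fintype.card_subtype, ← sum_pow_cycleCount, ← nsmul_eq_mul,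
    ← sum_const]
  calc ∑ _σ ∈ {σ : Perm (Fin N) | t < (cycleCount σ : ℝ)}, c ^ t
      ≤ ∑ σ ∈ {σ : Perm (Fin N) | t < (cycleCount σ : ℝ)}, c ^ cycleCount σ :=
        sum_le_sum fun σ hσ => by
          rw [← Real.rpow_natCast]
          exact Real.rpow_le_rpow_of_exponent_le hc (mem_filter.1 hσ).2.le
    _ ≤ ∑ σ, c ^ cycleCount σ :=
        sum_le_sum_of_subset_of_nonneg (subset_univ _) fun _ _ _ => by positivity

theorem add_natCast_le_mul_exp {c : ℝ} (j : ℕ) :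
    c + j ≤ (j + 1) * Real.exp ((c - 1) / (j + 1)) := by
  have hj : (0 : ℝ) < j + 1 := by positivity
  calc c + j = (j + 1) * ((c - 1) / (j + 1) + 1) := by field_simp; ring
    _ ≤ (j + 1) * Real.exp ((c - 1) / (j + 1)) :=
        mul_le_mul_of_nonneg_left (Real.add_one_le_exp _) hj.le

theorem prod_range_add_le_factorial_mul_exp {c : ℝ} (hc : 1 ≤ c) (N : ℕ) :
    ∏ j ∈ range N, (c + j) ≤ (N.factorial : ℝ) * Real.exp ((c - 1) * (1 + Real.log N)) := by
  calc ∏ j ∈ range N, (c + j)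
      ≤ ∏ j ∈ range N, ((j + 1) * Real.exp ((c - 1) / (j + 1))) :=
        prod_le_prod (fun j _ => by positivity) fun j _ => add_natCast_le_mul_exp j
    _ = (N.factorial : ℝ) * Real.exp ((c - 1) * harmonic N) := by
        rw [prod_mul_distrib, ← Real.exp_sum, harmonic, ← prod_range_add_one_eq_factorial]
        push_cast
        simp only [mul_sum, div_eq_mul_inv]
    _ ≤ (N.factorial : ℝ) * Real.exp ((c - 1) * (1 + Real.log N)) := by
        gcongr
        exact harmonic_le_one_add_log N

theorem card_cycleCount_gt_div_factorial_le {c : ℝ} (hc : 1 ≤ c) {N : ℕ} (hN : 0 < N) :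
    (Nat.card {σ : Perm (Fin N) // c * Real.log N < (cycleCount σ : ℝ)} : ℝ) / N.factorial
      ≤ Real.exp (c - 1) / N / (N : ℝ) ^ (c * (Real.log c - 1)) := by
  have hc0 : 0 < c := zero_lt_one.trans_le hc
  have hN0 : (0 : ℝ) < N := Nat.cast_pos.2 hN
  have hmarkov := (card_cycleCount_gt_mul_rpow_le hc (c * Real.log N) N).trans
    (prod_range_add_le_factorial_mul_exp hc N)
  calc _ ≤ Real.exp ((c - 1) * (1 + Real.log N)) / c ^ (c * Real.log N) := by
        rw [div_le_div_iff₀ (Nat.cast_pos.2 N.factorial_pos) (by positivity)]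
        linarith
    _ = Real.exp (c - 1 - Real.log N - Real.log N * (c * (Real.log c - 1))) := by
        rw [Real.rpow_def_of_pos hc0, ← Real.exp_sub]
        ring_nf
    _ = Real.exp (c - 1) / N / (N : ℝ) ^ (c * (Real.log c - 1)) := by
        rw [Real.exp_sub, Real.exp_sub, Real.exp_log hN0, Real.rpow_def_of_pos hN0]

/-- For a fixed constant `c > e`, the probability that a uniformly random permutation of
`{0,…,N−1}` has more than `c·log N` cycles is `O(√(log N) / N^{c(log c − 1)})`. -/
theorem stmt_11 (c : ℝ) (hc : Real.exp 1 < c) :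
    (fun N : ℕ =>
        (Nat.card {σ : Equiv.Perm (Fin N) // c * Real.log N < (cycleCount σ : ℝ)} : ℝ)
          / (Nat.factorial N : ℝ))
      =O[atTop]
      (fun N : ℕ => Real.sqrt (Real.log N) / (N : ℝ) ^ (c * (Real.log c - 1))) := by
  have hc1 : 1 ≤ c := (Real.one_lt_exp_iff.2 one_pos).le.trans hc.le
  have hlog : ∀ᶠ N : ℕ in atTop, 1 ≤ Real.log N :=
    (Real.tendsto_log_atTop.comp tendsto_natCast_atTop_atTop).eventually_ge_atTop 1
  refine IsBigO.of_bound (Real.exp (c - 1)) ?_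
  filter_upwards [hlog, eventually_gt_atTop 0] with N hlogN hN
  have hN1 : (1 : ℝ) ≤ N := Nat.one_le_cast.2 hN
  rw [Real.norm_of_nonneg (by positivity), Real.norm_of_nonneg (by positivity)]
  calc _ ≤ Real.exp (c - 1) / N / (N : ℝ) ^ (c * (Real.log c - 1)) :=
        card_cycleCount_gt_div_factorial_le hc1 hN
    _ ≤ Real.exp (c - 1) * Real.sqrt (Real.log N) / (N : ℝ) ^ (c * (Real.log c - 1)) := by
        gcongr
        exact (div_le_self (Real.exp_pos _).le hN1).trans
          (le_mul_of_one_le_right (Real.exp_pos _).le (Real.one_le_sqrt.2 hlogN))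
    _ = _ := mul_div_assoc _ _ _
end

section
/- Let p(N) denote the probability that a uniformly random permutation of {0,…,N−1} has more than 3.6·log N cycles (natural logarithm, fixed points counting as cycles). Then p(N) = o(1/N) as N → ∞. (Consequently, the CCL process truncated after l ≥ 3.6·log N steps cannot be distinguished from the untruncated process with advantage greater than o(1/N).) -/
open Asymptotics Filter

/-!
Counting pairs `(σ, A)` with `A` a `σ`-invariant subset of `Fin N` in two ways gives
`∑_σ #{invariant A} = ∑_A |A|! (N - |A|)! = (N + 1)!`. Unions of cycles are invariant, so a
permutation with `k` cycles has at least `2 ^ k` invariant subsets and `E[2 ^ cycles] ≤ N + 1`.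
By Markov's inequality the probability of more than `3.6 log N` cycles is at most
`(N + 1) / 2 ^ (3.6 log N) = (N + 1) N ^ (-3.6 log 2)`, which is `o(1/N)` since `3.6 log 2 > 2`.
-/

open Finset Nat

namespace Equiv.Perm

variable {α : Type*}

theorem SameCycle.eq_of_forall_le [Finite α] [PartialOrder α] {σ : Perm α} {x y : α}
    (hxy : σ.SameCycle x y) (hx : ∀ m : ℕ, x ≤ (σ ^ m) x) (hy : ∀ m : ℕ, y ≤ (σ ^ m) y) :
    x = y := by
  obtain ⟨i, -, hi⟩ := hxy.exists_pow_eq'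
  obtain ⟨j, -, hj⟩ := hxy.symm.exists_pow_eq'
  exact le_antisymm (hi ▸ hx i) (hj ▸ hy j)

theorem two_pow_card_cycle_minima_le_card_invariant_finset [Fintype α] [LinearOrder α]
    (σ : Perm α) :
    2 ^ Nat.card {x : α // ∀ m : ℕ, x ≤ (σ ^ m) x} ≤
      Nat.card {A : Finset α // ∀ x, σ x ∈ A ↔ x ∈ A} := by
  classical
  let cycleSpan (T : Finset {x : α // ∀ m : ℕ, x ≤ (σ ^ m) x}) :
      {A : Finset α // ∀ x, σ x ∈ A ↔ x ∈ A} :=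
    ⟨univ.filter fun x => ∃ t ∈ T, σ.SameCycle t x, fun x => by simp [sameCycle_apply_right]⟩
  have hinj : Function.Injective cycleSpan := by
    intro T T' h
    ext t
    have ht := congrArg (fun A => (t : α) ∈ A.1) h
    have key : ∀ T : Finset {x : α // ∀ m : ℕ, x ≤ (σ ^ m) x},
        (∃ s ∈ T, σ.SameCycle s t) ↔ t ∈ T := fun T =>
      ⟨fun ⟨s, hs, hst⟩ => Subtype.ext (hst.eq_of_forall_le s.2 t.2) ▸ hs,
        fun htT => ⟨t, htT, SameCycle.refl σ t⟩⟩
    simp only [cycleSpan, mem_filter, mem_univ, true_and, eq_iff_iff] at ht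
    rwa [key, key] at ht
  rw [Nat.card_eq_fintype_card, ← Fintype.card_finset, ← Nat.card_eq_fintype_card]
  exact Nat.card_le_card_of_injective cycleSpan hinj

variable [Fintype α] [DecidableEq α]

theorem card_stabilizer_finset (A : Finset α) :
    Nat.card {σ : Perm α // ∀ x, σ x ∈ A ↔ x ∈ A} = (#A)! * (Fintype.card α - #A)! := by
  have := DomMulAct.stabilizer_card (fun a => decide (a ∈ A))
  simp only [Fintype.prod_bool, funext_iff, Function.comp_apply, decide_eq_decide,
    decide_eq_true_eq, decide_eq_false_iff_not, Fintype.card_subtype_compl,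
    Fintype.card_coe] at this
  rw [Nat.card_eq_fintype_card, this]

theorem sum_card_invariant_finset :
    ∑ σ : Perm α, Nat.card {A : Finset α // ∀ x, σ x ∈ A ↔ x ∈ A} = (Fintype.card α + 1)! := by
  have h : ∀ m ∈ range (Fintype.card α + 1),
      (Fintype.card α).choose m • (m ! * (Fintype.card α - m)!) = (Fintype.card α)! := by
    intro m hm
    rw [smul_eq_mul, ← mul_assoc, choose_mul_factorial_mul_factorial (by grind)]
  calc ∑ σ : Perm α, Nat.card {A : Finset α // ∀ x, σ x ∈ A ↔ x ∈ A}
      = ∑ A : Finset α, Nat.card {σ : Perm α // ∀ x, σ x ∈ A ↔ x ∈ A} := by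
        simp only [Nat.card_eq_fintype_card, Fintype.card_subtype, card_filter]
        exact sum_comm
    _ = ∑ m ∈ range (Fintype.card α + 1),
          (Fintype.card α).choose m • (m ! * (Fintype.card α - m)!) := by
        simp only [card_stabilizer_finset]
        rw [← powerset_univ, sum_powerset_apply_card (fun m => m ! * (Fintype.card α - m)!),
          Finset.card_univ]
    _ = (Fintype.card α + 1)! := by
        rw [sum_congr rfl h, sum_const, card_range, smul_eq_mul, factorial_succ]

end Equiv.Perm

open Equiv

theorem sum_two_pow_cycleCount_le (N : ℕ) :
    ∑ σ : Perm (Fin N), 2 ^ cycleCount σ ≤ (N + 1)! :=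
  calc ∑ σ : Perm (Fin N), 2 ^ cycleCount σ
      ≤ ∑ σ : Perm (Fin N), Nat.card {A : Finset (Fin N) // ∀ x, σ x ∈ A ↔ x ∈ A} :=
        sum_le_sum fun σ _ => σ.two_pow_card_cycle_minima_le_card_invariant_finset
    _ = (N + 1)! := by rw [Perm.sum_card_invariant_finset, Fintype.card_fin]

theorem card_lt_cycleCount_mul_two_rpow_le (N : ℕ) (t : ℝ) :
    (Nat.card {σ : Perm (Fin N) // t < cycleCount σ} : ℝ) * 2 ^ t ≤ (N + 1)! := by
  classical
  rw [Nat.card_eq_fintype_card, Fintype.card_subtype, ← nsmul_eq_mul]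
  calc #{σ | t < cycleCount σ} • (2 : ℝ) ^ t
      ≤ ∑ σ ∈ {σ | t < cycleCount σ}, (2 : ℝ) ^ cycleCount σ :=
        card_nsmul_le_sum _ _ _ fun σ hσ => by
          rw [← Real.rpow_natCast]
          exact Real.rpow_le_rpow_of_exponent_le one_le_two (mem_filter.1 hσ).2.le
    _ ≤ ∑ σ, (2 : ℝ) ^ cycleCount σ :=
        sum_le_sum_of_subset_of_nonneg (subset_univ _) fun _ _ _ => by positivity
    _ ≤ (N + 1)! := by exact_mod_cast sum_two_pow_cycleCount_le N

theorem two_rpow_mul_log {x : ℝ} (hx : 0 < x) (a : ℝ) :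
    (2 : ℝ) ^ (a * Real.log x) = x ^ (a * Real.log 2) := by
  rw [Real.rpow_def_of_pos two_pos, Real.rpow_def_of_pos hx]
  ring_nf

theorem card_lt_cycleCount_div_factorial_le {N : ℕ} (hN : 1 ≤ N) (a : ℝ) :
    (Nat.card {σ : Perm (Fin N) // a * Real.log N < cycleCount σ} : ℝ) / N ! ≤
      2 * (N : ℝ) ^ (2 - a * Real.log 2) / N := by
  have hN' : (1 : ℝ) ≤ N := by exact_mod_cast hN
  have hmarkov := card_lt_cycleCount_mul_two_rpow_le N (a * Real.log N)
  rw [two_rpow_mul_log (by positivity), factorial_succ, cast_mul, cast_succ] at hmarkov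
  have hfac : (0 : ℝ) < N ! := by positivity
  calc _ ≤ 2 * N / (N : ℝ) ^ (a * Real.log 2) := by
        rw [div_le_div_iff₀ hfac (by positivity)]
        nlinarith
    _ = 2 * (N : ℝ) ^ (2 - a * Real.log 2) / N := by
        rw [Real.rpow_sub (by positivity), Real.rpow_two]
        field_simp

/-- The probability that a uniformly random permutation of `{0,…,N−1}` has more than
`3.6·log N` cycles is `o(1/N)`. -/
theorem stmt_13 :
    (fun N : ℕ =>
        (Nat.card {σ : Equiv.Perm (Fin N) //
            (3.6 : ℝ) * Real.log N < (cycleCount σ : ℝ)} : ℝ)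
          / (Nat.factorial N : ℝ))
      =o[atTop] (fun N : ℕ => 1 / (N : ℝ)) := by
  set c := 3.6 * Real.log 2
  have hc : 2 < c := by have := Real.log_two_gt_d9; norm_num [c]; linarith
  have hvanish : Tendsto (fun N : ℕ => 2 * (N : ℝ) ^ (2 - c)) atTop (nhds 0) := by
    have := ((tendsto_rpow_neg_atTop (by linarith : 0 < c - 2)).const_mul 2).comp
      tendsto_natCast_atTop_atTop
    simpa [neg_sub, Function.comp_def] using this
  have hsmall :
      (fun N : ℕ => 2 * (N : ℝ) ^ (2 - c) / N) =o[atTop] (fun N : ℕ => 1 / (N : ℝ)) := by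
    simpa only [one_mul, mul_one_div] using
      ((isLittleO_one_iff ℝ).2 hvanish).mul_isBigO (isBigO_refl (fun N : ℕ => 1 / (N : ℝ)) atTop)
  refine IsBigO.trans_isLittleO (IsBigO.of_bound' ?_) hsmall
  filter_upwards [eventually_ge_atTop 1] with N hN
  rw [Real.norm_of_nonneg (by positivity), Real.norm_of_nonneg (by positivity)]
  exact card_lt_cycleCount_div_factorial_le hN 3.6
end
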